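/- arXiv:0808.1888 — 6 statements merged into one kernel-verified Lean document; each statement's English description precedes it below -/
import Mathlib

section
/- Let G be a vertex-weighted graph with weighted interlace polynomial q as above. If a ∈ V(G) is a looped vertex, then q(G) = β(a)·q(G−a) + α(a)·(x−1)·q(G^a − a), where G^a is the local complement of G at a: adjacencies {x,y} (including loops x = y) among neighbors of a distinct from a are toggled. -/
open Finset

/-- GF(2) rank of the adjacency matrix of the induced subgraph on `S`. -/
noncomputable def mrank {V : Type} [Fintype V] [DecidableEq V]
    (M : Matrix V V (ZMod 2)) (S : Finset V) : ℕ :=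
  (Matrix.of (fun i j : {v // v ∈ S} => M i.1 j.1)).rank

/-- The weighted interlace polynomial of the graph with adjacency matrix `M`
restricted to the vertex set `U`, with vertex weights `α`, `β`, evaluated at `x`, `y`. -/
noncomputable def interlaceQ {V : Type} [Fintype V] [DecidableEq V]
    {R : Type} [CommRing R] (M : Matrix V V (ZMod 2)) (U : Finset V)
    (α β : V → R) (x y : R) : R :=
  ∑ S ∈ U.powerset, (∏ s ∈ S, α s) * (∏ v ∈ U \ S, β v) *
    (x - 1) ^ mrank M S * (y - 1) ^ (S.card - mrank M S)

/-- Local complementation at `a`: toggle adjacencies (including loops) among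
neighbors of `a` distinct from `a`. -/
def localComp {V : Type} [DecidableEq V] (M : Matrix V V (ZMod 2)) (a : V) :
    Matrix V V (ZMod 2) :=
  fun i j => if i = a ∨ j = a then M i j else M i j + M i a * M j a

/-- Pivot at the edge `ab`. -/
def pivot {V : Type} [DecidableEq V] (M : Matrix V V (ZMod 2)) (a b : V) :
    Matrix V V (ZMod 2) :=
  fun i j => if i = a ∨ i = b ∨ j = a ∨ j = b then M i j
    else M i j + M i a * M j b + M i b * M j a

section Aux

open Matrix

lemma range_prodMap' {K M₁ M₂ M₃ M₄ : Type*} [Field K]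
    [AddCommGroup M₁] [Module K M₁] [AddCommGroup M₂] [Module K M₂]
    [AddCommGroup M₃] [Module K M₃] [AddCommGroup M₄] [Module K M₄]
    (f : M₁ →ₗ[K] M₂) (g : M₃ →ₗ[K] M₄) :
    LinearMap.range (f.prodMap g) = (LinearMap.range f).prod (LinearMap.range g) := by
  ext ⟨x, y⟩
  simp only [LinearMap.mem_range, Submodule.mem_prod, LinearMap.prodMap_apply, Prod.mk.injEq,
    Prod.exists]
  constructor
  · rintro ⟨a, b, h1, h2⟩; exact ⟨⟨a, h1⟩, ⟨b, h2⟩⟩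
  · rintro ⟨⟨a, h1⟩, ⟨b, h2⟩⟩; exact ⟨a, b, h1, h2⟩

lemma finrank_prod_submodule {K M M' : Type*} [Field K]
    [AddCommGroup M] [Module K M] [AddCommGroup M'] [Module K M']
    [FiniteDimensional K M] [FiniteDimensional K M']
    (S : Submodule K M) (T : Submodule K M') :
    Module.finrank K (S.prod T) = Module.finrank K S + Module.finrank K T := by
  have e : (S.prod T) ≃ₗ[K] S × T :=
    { toFun := fun x => (⟨x.1.1, x.2.1⟩, ⟨x.1.2, x.2.2⟩)
      invFun := fun p => ⟨(p.1.1, p.2.1), ⟨p.1.2, p.2.2⟩⟩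
      map_add' := fun _ _ => rfl
      map_smul' := fun _ _ => rfl
      left_inv := fun _ => rfl
      right_inv := fun _ => rfl }
  rw [e.finrank_eq, Module.finrank_prod]

lemma rank_fromBlocks_diag {l m K : Type*} [Fintype l] [Fintype m] [DecidableEq l]
    [DecidableEq m] [Field K] (A : Matrix l l K) (D : Matrix m m K) :
    (Matrix.fromBlocks A 0 0 D).rank = A.rank + D.rank := by
  classical
  set e := LinearEquiv.sumArrowLequivProdArrow l m K K with he
  have hF : (Matrix.fromBlocks A 0 0 D).mulVecLin
      = (e.symm : ((l → K) × (m → K)) →ₗ[K] (l ⊕ m → K)) ∘ₗ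
        ((A.mulVecLin.prodMap D.mulVecLin) ∘ₗ (e : (l ⊕ m → K) →ₗ[K] (l → K) × (m → K))) := by
    apply LinearMap.ext
    intro x
    simp only [Matrix.mulVecLin_apply, LinearMap.coe_comp, Function.comp_apply,
      LinearEquiv.coe_coe, LinearMap.prodMap_apply]
    rw [Matrix.fromBlocks_mulVec]
    ext (i | i) <;>
      simp [e, LinearEquiv.sumArrowLequivProdArrow, Equiv.sumArrowEquivProdArrow,
        Matrix.zero_mulVec]
  rw [Matrix.rank, hF, LinearMap.range_comp,
    LinearMap.range_comp_of_range_eq_top _ (LinearEquiv.range e),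
    LinearEquiv.finrank_map_eq, range_prodMap', finrank_prod_submodule]
  rfl

lemma rank_conj {n K : Type*} [Fintype n] [DecidableEq n] [Field K]
    (P A : Matrix n n K) (hP : P * P = 1) :
    (P * A * Pᵀ).rank = A.rank := by
  have hPT : Pᵀ * Pᵀ = 1 := by rw [← Matrix.transpose_mul, hP, Matrix.transpose_one]
  apply le_antisymm
  · exact (Matrix.rank_mul_le_left _ _).trans (Matrix.rank_mul_le_right _ _)
  · have hA : A = P * (P * A * Pᵀ) * Pᵀ := by
      have : P * (P * A * Pᵀ) * Pᵀ = (P * P) * A * (Pᵀ * Pᵀ) := by noncomm_ring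
      rw [this, hP, hPT, one_mul, mul_one]
    conv_lhs => rw [hA]
    exact (Matrix.rank_mul_le_left _ _).trans (Matrix.rank_mul_le_right _ _)

lemma mrank_loop {V : Type} [Fintype V] [DecidableEq V]
    (M : Matrix V V (ZMod 2)) (hM : M.IsSymm) (a : V) (ha : M a a = 1)
    (S : Finset V) (haS : a ∈ S) :
    mrank M S = 1 + mrank (localComp M a) (S.erase a) := by
  classical
  set n := {v // v ∈ S}
  set a0 : n := ⟨a, haS⟩ with ha0
  set A : Matrix n n (ZMod 2) := Matrix.of (fun i j : n => M i.1 j.1) with hA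
  have hsym : ∀ i j : n, A i j = A j i := by
    intro i j
    simp only [hA, Matrix.of_apply]
    exact (Matrix.IsSymm.apply hM i.1 j.1).symm
  have haa : A a0 a0 = 1 := ha
  have add_self : ∀ x : ZMod 2, x + x = 0 := by decide
  -- the elementary matrix
  set E : Matrix n n (ZMod 2) :=
    Matrix.of (fun i k : n => if k = a0 ∧ i ≠ a0 then A i a0 else 0) with hE
  set P : Matrix n n (ZMod 2) := 1 + E with hP
  have hEE : E * E = 0 := by
    ext i j
    rw [Matrix.mul_apply]
    apply Finset.sum_eq_zero
    intro k _
    simp only [hE, Matrix.of_apply, Matrix.zero_apply]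
    by_cases hk : k = a0 ∧ i ≠ a0
    · rcases hk with ⟨hk1, hk2⟩
      subst hk1
      simp
    · simp [hk]
  have hP2 : P * P = 1 := by
    rw [hP, add_mul, mul_add, mul_add, hEE, one_mul, mul_one, one_mul]
    ext i j
    simp only [Matrix.add_apply, Matrix.zero_apply, add_zero]
    rw [add_assoc, add_self, add_zero]
  -- the Schur-complement-like matrix
  set N : Matrix n n (ZMod 2) := Matrix.of (fun i j : n =>
    if i = a0 then (if j = a0 then 1 else 0)
    else if j = a0 then 0 else A i j + A i a0 * A j a0) with hN
  have hEA : E * A = Matrix.of (fun i j : n => if i = a0 then 0 else A i a0 * A a0 j) := by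
    ext i j
    rw [Matrix.mul_apply]
    by_cases hi : i = a0
    · subst hi; simp [hE]
    · rw [Finset.sum_eq_single a0]
      · simp [hE, hi]
      · intro k _ hk; simp [hE, hk]
      · intro h; exact absurd (Finset.mem_univ a0) h
  have hAE : ∀ B : Matrix n n (ZMod 2), B * Eᵀ =
      Matrix.of (fun i j : n => if j = a0 then 0 else B i a0 * A j a0) := by
    intro B
    ext i j
    rw [Matrix.mul_apply]
    simp only [Matrix.of_apply]
    by_cases hj : j = a0
    · subst hj
      rw [if_pos rfl]
      apply Finset.sum_eq_zero
      intro k _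
      simp [hE, Matrix.transpose_apply]
    · rw [Finset.sum_eq_single a0]
      · simp [hE, Matrix.transpose_apply, hj]
      · intro k _ hk; simp [hE, Matrix.transpose_apply, hk]
      · intro h; exact absurd (Finset.mem_univ a0) h
  have hconj : P * A * Pᵀ = N := by
    rw [hP, Matrix.transpose_add, Matrix.transpose_one, add_mul, one_mul, mul_add, mul_one,
      add_mul, hAE, hAE, hEA]
    ext i j
    simp only [Matrix.add_apply, Matrix.of_apply]
    by_cases hi : i = a0 <;> by_cases hj : j = a0
    · simp [hN, hi, hj, haa]
    · subst hi
      simp only [hN, Matrix.of_apply, if_pos rfl, if_neg hj, if_true, haa, one_mul, mul_one]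
      try simp only [if_true]
      rw [hsym a0 j]
      simp [add_self]
    · subst hj
      simp only [hN, Matrix.of_apply, if_pos rfl, if_neg hi, if_true, haa, one_mul, mul_one]
      try simp only [if_true]
      simp [add_self]
    · simp only [hN, Matrix.of_apply, if_neg hi, if_neg hj, haa, one_mul, mul_one]
      rw [hsym a0 j]
      generalize A i j = u
      generalize A i a0 = v
      generalize A j a0 = w
      revert u v w
      decide
  have hrankN : A.rank = N.rank := by rw [← hconj, rank_conj _ _ hP2]
  -- split off the pivot via block decomposition
  set e : {i : n // i = a0} ⊕ {i : n // ¬ i = a0} ≃ n := Equiv.sumCompl (· = a0) with he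
  set B : Matrix {i : n // ¬ i = a0} {i : n // ¬ i = a0} (ZMod 2) :=
    Matrix.of (fun i j => A i.1 j.1 + A i.1 a0 * A j.1 a0) with hB
  have hsub : N.submatrix e e =
      Matrix.fromBlocks (1 : Matrix {i : n // i = a0} {i : n // i = a0} (ZMod 2)) 0 0 B := by
    ext i j
    rcases i with i | i <;> rcases j with j | j <;>
      simp [hN, hB, he, Equiv.sumCompl, Matrix.fromBlocks, Matrix.submatrix, i.2, j.2,
        Matrix.one_apply, Subtype.ext_iff]
  have hcard1 : Fintype.card {i : n // i = a0} = 1 := Fintype.card_subtype_eq a0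
  have hrank1 : (1 : Matrix {i : n // i = a0} {i : n // i = a0} (ZMod 2)).rank = 1 := by
    rw [Matrix.rank_one, hcard1]
  have hNrank : N.rank = 1 + B.rank := by
    rw [← Matrix.rank_submatrix N e e, hsub, rank_fromBlocks_diag, hrank1]
  -- identify B with the localComp matrix on S.erase a
  have key : B.rank = mrank (localComp M a) (S.erase a) := by
    set f : {v // v ∈ S.erase a} ≃ {i : n // ¬ i = a0} :=
      { toFun := fun v => ⟨⟨v.1, Finset.mem_of_mem_erase v.2⟩,
          fun h => (Finset.mem_erase.mp v.2).1 (congrArg Subtype.val h)⟩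
        invFun := fun i => ⟨i.1.1, Finset.mem_erase.mpr
          ⟨fun h => i.2 (Subtype.ext h), i.1.2⟩⟩
        left_inv := fun v => rfl
        right_inv := fun i => rfl }
    have hmat : Matrix.of (fun i j : {v // v ∈ S.erase a} =>
        (localComp M a) i.1 j.1) = B.submatrix f f := by
      ext i j
      have hia : i.1 ≠ a := (Finset.mem_erase.mp i.2).1
      have hja : j.1 ≠ a := (Finset.mem_erase.mp j.2).1
      simp only [Matrix.of_apply, Matrix.submatrix_apply, hB, localComp, hA]
      rw [if_neg]
      · rfl
      · tauto
    rw [mrank, hmat, Matrix.rank_submatrix]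
  rw [show mrank M S = A.rank from rfl, hrankN, hNrank, key]

lemma interlaceQ_insert {V : Type} [Fintype V] [DecidableEq V]
    {R : Type} [CommRing R] (M : Matrix V V (ZMod 2)) (hM : M.IsSymm)
    (α β : V → R) (x y : R) (a : V) (ha : M a a = 1)
    (U : Finset V) (haU : a ∉ U) :
    interlaceQ M (insert a U) α β x y =
      β a * interlaceQ M U α β x y +
        α a * (x - 1) * interlaceQ (localComp M a) U α β x y := by
  classical
  rw [interlaceQ, Finset.sum_powerset_insert haU, interlaceQ, interlaceQ,
    Finset.mul_sum, Finset.mul_sum]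
  congr 1
  · apply Finset.sum_congr rfl
    intro S hS
    rw [Finset.mem_powerset] at hS
    have hd : insert a U \ S = insert a (U \ S) :=
      Finset.insert_sdiff_of_notMem _ (fun h => haU (hS h))
    have haUS : a ∉ U \ S := fun h => haU (Finset.mem_sdiff.mp h).1
    rw [hd, Finset.prod_insert haUS]
    ring
  · apply Finset.sum_congr rfl
    intro S hS
    rw [Finset.mem_powerset] at hS
    have haS : a ∉ S := fun h => haU (hS h)
    have hd : insert a U \ insert a S = U \ S := by
      rw [Finset.insert_sdiff_insert, Finset.sdiff_insert,
        Finset.erase_eq_of_notMem (fun h => haU (Finset.mem_sdiff.mp h).1)]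
    rw [Finset.prod_insert haS, hd,
      mrank_loop M hM a ha (insert a S) (Finset.mem_insert_self a S),
      Finset.erase_insert haS, Finset.card_insert_of_notMem haS]
    have hnull : (S.card + 1) - (1 + mrank (localComp M a) S)
        = S.card - mrank (localComp M a) S := by omega
    rw [hnull, pow_add, pow_one]
    ring

end Aux

theorem loop_recursion {V : Type} [Fintype V] [DecidableEq V]
    {R : Type} [CommRing R] (M : Matrix V V (ZMod 2)) (hM : M.IsSymm)
    (α β : V → R) (x y : R) (a : V) (ha : M a a = 1) :
    interlaceQ M Finset.univ α β x y =
      β a * interlaceQ M (Finset.univ.erase a) α β x y +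
        α a * (x - 1) * interlaceQ (localComp M a) (Finset.univ.erase a) α β x y := by
  have hU : (Finset.univ : Finset V) = insert a (Finset.univ.erase a) :=
    (Finset.insert_erase (Finset.mem_univ a)).symm
  conv_lhs => rw [hU]
  exact interlaceQ_insert M hM α β x y a ha _ (Finset.notMem_erase a _)
end

section
/- Let G be a vertex-weighted graph and a ∈ V(G) an unlooped vertex. Then q(G) − β(a)·q(G−a) = q(G^a) − β(a)·q(G^a − a), where G^a is the local complement at a. -/
open Finset

lemma mrank_localComp {V : Type} [Fintype V] [DecidableEq V]
    (M : Matrix V V (ZMod 2)) (hM : M.IsSymm) (a : V) (ha : M a a = 0)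
    (S : Finset V) (haS : a ∈ S) : mrank (localComp M a) S = mrank M S := by
  classical
  set M' : Matrix {v // v ∈ S} {v // v ∈ S} (ZMod 2) :=
    Matrix.of (fun i j : {v // v ∈ S} => M i.1 j.1) with hM'
  set a' : {v // v ∈ S} := ⟨a, haS⟩ with ha'
  set F : Matrix {v // v ∈ S} {v // v ∈ S} (ZMod 2) :=
    Matrix.of (fun i j => if i = a' then M a j.1 else 0) with hF
  have hMF : ∀ i j : {v // v ∈ S}, (M' * F) i j = M i.1 a * M a j.1 := by
    intro i j
    rw [Matrix.mul_apply]
    rw [Finset.sum_eq_single a']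
    · simp [hF, hM', ha']
    · intro k _ hk; simp [hF, hk]
    · simp
  have hFF : F * F = 0 := by
    ext i j
    rw [Matrix.mul_apply]
    rw [Finset.sum_eq_single a']
    · simp [hF, ha, ha']
    · intro k _ hk; simp [hF, hk]
    · simp
  have hsymm : ∀ i j : V, M i j = M j i := fun i j => by
    have := congrFun (congrFun hM j) i
    simpa [Matrix.transpose_apply] using this
  have hN : Matrix.of (fun i j : {v // v ∈ S} => localComp M a i.1 j.1)
      = M' * (1 + F) := by
    ext i j
    rw [Matrix.mul_add, Matrix.mul_one, Matrix.add_apply, hMF]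
    show localComp M a i.1 j.1 = M i.1 j.1 + M i.1 a * M a j.1
    unfold localComp
    by_cases hi : i.1 = a
    · rw [if_pos (Or.inl hi), hi, ha, zero_mul, add_zero]
    · by_cases hj : j.1 = a
      · rw [if_pos (Or.inr hj), hj, ha, mul_zero, add_zero]
      · rw [if_neg (by tauto), hsymm j.1 a, hsymm a j.1]
  have hE : (1 + F) * (1 + F) = 1 := by
    have h2 : F + F = 0 := by
      ext i j
      simp only [Matrix.add_apply, Matrix.zero_apply]
      exact CharTwo.add_self_eq_zero _
    have expand : (1 + F) * (1 + F) = 1 + (F + F) + F * F := by noncomm_ring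
    rw [expand, h2, hFF, add_zero, add_zero]
  have hunit : IsUnit (1 + F).det :=
    Matrix.isUnit_det_of_left_inverse hE
  unfold mrank
  rw [hN, Matrix.rank_mul_eq_left_of_isUnit_det _ _ hunit]

lemma interlace_diff {V : Type} [Fintype V] [DecidableEq V]
    {R : Type} [CommRing R] (M : Matrix V V (ZMod 2))
    (α β : V → R) (x y : R) (a : V) :
    interlaceQ M Finset.univ α β x y -
        β a * interlaceQ M (Finset.univ.erase a) α β x y =
      ∑ S ∈ Finset.univ.powerset.filter (fun S => a ∈ S),
        (∏ s ∈ S, α s) * (∏ v ∈ (Finset.univ : Finset V) \ S, β v) *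
          (x - 1) ^ mrank M S * (y - 1) ^ (S.card - mrank M S) := by
  classical
  have hsplit := Finset.sum_filter_add_sum_filter_not (Finset.univ.powerset (α := V))
    (fun S => a ∈ S)
    (fun S => (∏ s ∈ S, α s) * (∏ v ∈ (Finset.univ : Finset V) \ S, β v) *
      (x - 1) ^ mrank M S * (y - 1) ^ (S.card - mrank M S))
  have hfil : Finset.univ.powerset.filter (fun S => ¬ a ∈ S)
      = (Finset.univ.erase a).powerset := by
    ext S
    simp [Finset.mem_powerset, Finset.subset_erase]
  have hrest : ∑ S ∈ (Finset.univ.erase a).powerset,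
      (∏ s ∈ S, α s) * (∏ v ∈ (Finset.univ : Finset V) \ S, β v) *
        (x - 1) ^ mrank M S * (y - 1) ^ (S.card - mrank M S)
      = β a * interlaceQ M (Finset.univ.erase a) α β x y := by
    rw [interlaceQ, Finset.mul_sum]
    refine Finset.sum_congr rfl (fun S hS => ?_)
    rw [Finset.mem_powerset] at hS
    have haS : a ∉ S := fun h => (Finset.mem_erase.mp (hS h)).1 rfl
    have hins : (Finset.univ : Finset V) \ S = insert a ((Finset.univ.erase a) \ S) := by
      ext v
      by_cases hv : v = a
      · subst hv; simp [haS]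
      · simp [hv, Finset.mem_erase]
    have hnot : a ∉ (Finset.univ.erase a) \ S := by simp
    rw [hins, Finset.prod_insert hnot]
    ring
  rw [interlaceQ, ← hsplit, hfil, hrest]
  ring

theorem local_comp_identity {V : Type} [Fintype V] [DecidableEq V]
    {R : Type} [CommRing R] (M : Matrix V V (ZMod 2)) (hM : M.IsSymm)
    (α β : V → R) (x y : R) (a : V) (ha : M a a = 0) :
    interlaceQ M Finset.univ α β x y -
        β a * interlaceQ M (Finset.univ.erase a) α β x y =
      interlaceQ (localComp M a) Finset.univ α β x y -
        β a * interlaceQ (localComp M a) (Finset.univ.erase a) α β x y := by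
  rw [interlace_diff M α β x y a, interlace_diff (localComp M a) α β x y a]
  refine Finset.sum_congr rfl fun S hS => ?_
  rw [Finset.mem_filter] at hS
  rw [mrank_localComp M hM a ha S hS.2]
end

section
/- Let a and b be distinct unlooped adjacent vertices in a vertex-weighted graph G, and let (G^{ab})′ be obtained from the pivot G^{ab} by changing weights to α′(a) = β(b), β′(a) = α(b)(x−1)², α′(b) = β(a), β′(b) = α(a)(x−1)². Then (x−1)²·q(G) = q((G^{ab})′). -/
open Finset

open Matrix

section Pivot
variable {V : Type} [DecidableEq V] (M : Matrix V V (ZMod 2)) (a b : V)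

lemma pivot_isSymm (hM : M.IsSymm) : (pivot M a b).IsSymm := by
  apply Matrix.IsSymm.ext
  intro i j
  unfold pivot
  by_cases hc : j = a ∨ j = b ∨ i = a ∨ i = b
  · rw [if_pos hc, if_pos (by tauto), hM.apply]
  · rw [if_neg hc, if_neg (by tauto), hM.apply i j]
    ring

lemma pivot_apply_left (i : V) : pivot M a b i a = M i a := by
  unfold pivot; rw [if_pos (by tauto)]

lemma pivot_apply_left' (i : V) : pivot M a b i b = M i b := by
  unfold pivot; rw [if_pos (by tauto)]

lemma pivot_apply_right (j : V) : pivot M a b a j = M a j := by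
  unfold pivot; rw [if_pos (by tauto)]

lemma pivot_apply_right' (j : V) : pivot M a b b j = M b j := by
  unfold pivot; rw [if_pos (by tauto)]

lemma pivot_pivot : pivot (pivot M a b) a b = M := by
  funext i j
  by_cases hc : i = a ∨ i = b ∨ j = a ∨ j = b
  · show (if _ then _ else _) = _
    rw [if_pos hc]
    show (if _ then _ else _) = _
    rw [if_pos hc]
  · show (if _ then _ else _) = _
    rw [if_neg hc, pivot_apply_left M a b i, pivot_apply_left M a b j,
      pivot_apply_left' M a b i, pivot_apply_left' M a b j]
    show (if _ then _ else _) + _ + _ = _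
    rw [if_neg hc]
    have h2 : ∀ z w q : ZMod 2, z + w + q + w + q = z := by decide
    exact h2 _ _ _

lemma pivot_comm : pivot M a b = pivot M b a := by
  funext i j
  unfold pivot
  by_cases hc : i = a ∨ i = b ∨ j = a ∨ j = b
  · rw [if_pos hc, if_pos (by tauto)]
  · rw [if_neg hc, if_neg (by tauto)]
    ring

end Pivot

-- ===== rank lemmas =====
section RankLemmas

variable {F : Type*} [Field F]

lemma myrange_prodMap {M₁ N₁ M₂ N₂ : Type*} [AddCommGroup M₁] [AddCommGroup N₁]
    [AddCommGroup M₂] [AddCommGroup N₂] [Module F M₁] [Module F N₁] [Module F M₂]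
    [Module F N₂] (f : M₁ →ₗ[F] M₂) (g : N₁ →ₗ[F] N₂) :
    LinearMap.range (f.prodMap g) = (LinearMap.range f).prod (LinearMap.range g) := by
  apply le_antisymm
  · rintro _ ⟨y, rfl⟩
    exact ⟨⟨y.1, rfl⟩, ⟨y.2, rfl⟩⟩
  · rintro ⟨x₁, x₂⟩ ⟨⟨y₁, h₁⟩, y₂, h₂⟩
    exact ⟨(y₁, y₂), Prod.ext h₁ h₂⟩

lemma myfinrank_prod {M N : Type*} [AddCommGroup M] [Module F M] [AddCommGroup N]
    [Module F N] [FiniteDimensional F M] [FiniteDimensional F N]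
    (p : Submodule F M) (q : Submodule F N) :
    Module.finrank F (p.prod q) = Module.finrank F p + Module.finrank F q := by
  have e : (p.prod q) ≃ₗ[F] p × q :=
    { toFun := fun x => (⟨x.1.1, x.2.1⟩, ⟨x.1.2, x.2.2⟩)
      invFun := fun y => ⟨(y.1.1, y.2.1), ⟨y.1.2, y.2.2⟩⟩
      map_add' := fun _ _ => rfl
      map_smul' := fun _ _ => rfl
      left_inv := fun _ => rfl
      right_inv := fun _ => rfl }
  rw [e.finrank_eq, Module.finrank_prod]

lemma myrank_fromBlocks_zero {m n : Type*} [Fintype m] [Fintype n] [DecidableEq m]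
    [DecidableEq n] (A : Matrix m m F) (D : Matrix n n F) :
    (Matrix.fromBlocks A 0 0 D).rank = A.rank + D.rank := by
  classical
  let e : ((m → F) × (n → F)) ≃ₗ[F] (m ⊕ n → F) :=
    { toFun := fun p => Sum.elim p.1 p.2
      invFun := fun f => (f ∘ Sum.inl, f ∘ Sum.inr)
      map_add' := by intro p q; funext i; cases i <;> rfl
      map_smul' := by intro c p; funext i; cases i <;> rfl
      left_inv := fun p => rfl
      right_inv := fun f => by funext i; cases i <;> rfl }
  have hcomp : (Matrix.fromBlocks A 0 0 D).mulVecLin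
      = (e : ((m → F) × (n → F)) →ₗ[F] (m ⊕ n → F)) ∘ₗ
        ((A.mulVecLin.prodMap D.mulVecLin) ∘ₗ
          (e.symm : (m ⊕ n → F) →ₗ[F] ((m → F) × (n → F)))) := by
    apply LinearMap.ext
    intro f
    funext i
    cases i <;>
      simp [e, Matrix.mulVecLin_apply, Matrix.fromBlocks_mulVec, Matrix.zero_mulVec] <;> rfl
  rw [Matrix.rank, hcomp, LinearMap.range_comp,
    LinearMap.range_comp_of_range_eq_top _ (LinearEquiv.range e.symm),
    myrange_prodMap, LinearEquiv.finrank_map_eq, myfinrank_prod]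
  rfl

lemma myrank_fromBlocks_isUnit {m n : Type*} [Fintype m] [Fintype n] [DecidableEq m]
    [DecidableEq n] (A : Matrix m m F) (B : Matrix m n F) (C : Matrix n m F)
    (K : Matrix n n F) (hK : IsUnit K.det) :
    (Matrix.fromBlocks A B C K).rank = (A - B * K⁻¹ * C).rank + Fintype.card n := by
  have hfact : Matrix.fromBlocks A B C K =
      (Matrix.fromBlocks 1 (B * K⁻¹) 0 1) *
        (Matrix.fromBlocks (A - B * K⁻¹ * C) 0 0 K) *
        (Matrix.fromBlocks 1 0 (K⁻¹ * C) 1) := by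
    rw [Matrix.fromBlocks_multiply, Matrix.fromBlocks_multiply]
    simp only [Matrix.one_mul, Matrix.mul_one, Matrix.mul_zero, Matrix.zero_mul,
      add_zero, zero_add, Matrix.nonsing_inv_mul_cancel_right _ _ hK,
      Matrix.mul_nonsing_inv_cancel_left _ _ hK]
    rw [← Matrix.mul_assoc, sub_add_cancel]
  have hL : IsUnit ((Matrix.fromBlocks (1 : Matrix m m F) (B * K⁻¹) 0 1)).det := by
    rw [Matrix.det_fromBlocks_zero₂₁]; simp
  have hR : IsUnit ((Matrix.fromBlocks (1 : Matrix m m F) 0 (K⁻¹ * C) 1)).det := by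
    rw [Matrix.det_fromBlocks_zero₁₂]; simp
  rw [hfact, Matrix.rank_mul_eq_left_of_isUnit_det _ _ hR,
    Matrix.rank_mul_eq_right_of_isUnit_det _ _ hL, myrank_fromBlocks_zero,
    Matrix.rank_of_isUnit K ((Matrix.isUnit_iff_isUnit_det K).mpr hK)]

end RankLemmas

-- ===== equivs =====
section Equivs
variable {V : Type} [DecidableEq V]

def sumEquiv₂ (S : Finset V) (a b : V) (ha : a ∉ S) (hb : b ∉ S) (hab : a ≠ b) :
    ({v // v ∈ S} ⊕ Bool) ≃ {v // v ∈ insert a (insert b S)} where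
  toFun := fun x => match x with
    | .inl s => ⟨s.1, by simp [s.2]⟩
    | .inr true => ⟨a, by simp⟩
    | .inr false => ⟨b, by simp⟩
  invFun y := if h : y.1 ∈ S then Sum.inl ⟨y.1, h⟩ else Sum.inr (decide (y.1 = a))
  left_inv := by
    rintro (s | t)
    · simp [s.2]
    · cases t
      · simp [ha, hb, hab, hab.symm]
      · simp [ha]
  right_inv := by
    rintro ⟨v, hv⟩
    by_cases h : v ∈ S
    · simp [h]
    · rcases Finset.mem_insert.mp hv with rfl | hv'
      · simp [ha]
      · rcases Finset.mem_insert.mp hv' with rfl | hv''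
        · simp [hb, hab.symm]
        · exact absurd hv'' h

def sumEquiv₁ (S : Finset V) (a : V) (ha : a ∉ S) :
    ({v // v ∈ S} ⊕ Unit) ≃ {v // v ∈ insert a S} where
  toFun := fun x => match x with
    | .inl s => ⟨s.1, by simp [s.2]⟩
    | .inr _ => ⟨a, by simp⟩
  invFun y := if h : y.1 ∈ S then Sum.inl ⟨y.1, h⟩ else Sum.inr ()
  left_inv := by
    rintro (s | t)
    · simp [s.2]
    · simp [ha]
  right_inv := by
    rintro ⟨v, hv⟩
    by_cases h : v ∈ S
    · simp [h]
    · rcases Finset.mem_insert.mp hv with rfl | hv'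
      · simp [ha]
      · exact absurd hv' h

end Equivs

-- ===== mrank lemmas =====
section MrankLemmas
variable {V : Type} [Fintype V] [DecidableEq V]

lemma mrank_pair (M : Matrix V V (ZMod 2)) (hM : M.IsSymm) (a b : V) (hab : a ≠ b)
    (haa : M a a = 0) (hbb : M b b = 0) (hab1 : M a b = 1)
    (S : Finset V) (haS : a ∉ S) (hbS : b ∉ S) :
    mrank M (insert a (insert b S)) = mrank (pivot M a b) S + 2 := by
  classical
  set e := sumEquiv₂ S a b haS hbS hab with he
  set A : Matrix {v // v ∈ S} {v // v ∈ S} (ZMod 2) := Matrix.of fun i j => M i.1 j.1 with hA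
  set B : Matrix {v // v ∈ S} Bool (ZMod 2) :=
    Matrix.of (fun i t => M i.1 (if t then a else b)) with hB
  set C : Matrix Bool {v // v ∈ S} (ZMod 2) :=
    Matrix.of (fun t j => M (if t then a else b) j.1) with hC
  set K : Matrix Bool Bool (ZMod 2) := Matrix.of (fun s t => if s = t then 0 else 1) with hK
  have hKK : K * K = 1 := by
    ext s t
    cases s <;> cases t <;>
      simp [hK, Matrix.mul_apply, Fintype.sum_bool, Matrix.one_apply]
  have hdetK : IsUnit K.det :=
    IsUnit.of_mul_eq_one _ (by rw [← Matrix.det_mul, hKK, Matrix.det_one])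
  have hKinv : K⁻¹ = K := Matrix.inv_eq_right_inv hKK
  have hsub : (Matrix.of fun i j : {v // v ∈ insert a (insert b S)} => M i.1 j.1).submatrix e e
      = Matrix.fromBlocks A B C K := by
    funext i j
    rcases i with i | ti <;> rcases j with j | tj
    · rfl
    · cases tj <;> rfl
    · cases ti <;> rfl
    · cases ti <;> cases tj <;>
        simp [he, sumEquiv₂, hK, haa, hbb, hab1, hM.apply a b]
  have h1 : mrank M (insert a (insert b S)) = (Matrix.fromBlocks A B C K).rank := by
    rw [mrank, ← hsub, Matrix.rank_submatrix]
  have hneg : ∀ z : ZMod 2, -z = z := by decide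
  have h2 : A - B * K⁻¹ * C = Matrix.of fun i j : {v // v ∈ S} => pivot M a b i.1 j.1 := by
    rw [hKinv]
    funext i j
    have hia : i.1 ≠ a := fun h => haS (h ▸ i.2)
    have hib : i.1 ≠ b := fun h => hbS (h ▸ i.2)
    have hja : j.1 ≠ a := fun h => haS (h ▸ j.2)
    have hjb : j.1 ≠ b := fun h => hbS (h ▸ j.2)
    have hP : pivot M a b i.1 j.1 = M i.1 j.1 + M i.1 a * M j.1 b + M i.1 b * M j.1 a := by
      unfold pivot; rw [if_neg (by tauto)]
    have hBKC : (B * K * C) i j = M i.1 b * M a j.1 + M i.1 a * M b j.1 := by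
      simp [hB, hC, hK, Matrix.mul_apply, Fintype.sum_bool]
    rw [Matrix.sub_apply, hBKC, Matrix.of_apply, hP, hA]
    rw [show M a j.1 = M j.1 a from (hM.apply a j.1).symm,
      show M b j.1 = M j.1 b from (hM.apply b j.1).symm]
    rw [sub_eq_add_neg, hneg]
    simp only [Matrix.of_apply]
    ring
  rw [h1, myrank_fromBlocks_isUnit A B C K hdetK, h2]
  rfl

lemma mrank_pair' (M : Matrix V V (ZMod 2)) (hM : M.IsSymm) (a b : V) (hab : a ≠ b)
    (haa : M a a = 0) (hbb : M b b = 0) (hab1 : M a b = 1)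
    (S : Finset V) (haS : a ∉ S) (hbS : b ∉ S) :
    mrank (pivot M a b) (insert a (insert b S)) = mrank M S + 2 := by
  have h := mrank_pair (pivot M a b) (pivot_isSymm M a b hM) a b hab
    ((pivot_apply_right M a b a).trans haa)
    ((pivot_apply_right' M a b b).trans hbb)
    ((pivot_apply_right M a b b).trans hab1) S haS hbS
  rw [h, pivot_pivot]

lemma mrank_insert_one (M : Matrix V V (ZMod 2)) (hM : M.IsSymm) (a b : V)
    (haa : M a a = 0) (S : Finset V) (haS : a ∉ S) (hbS : b ∉ S) :
    mrank (pivot M a b) (insert a S) = mrank M (insert a S) := by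
  classical
  set e := sumEquiv₁ S a haS with he
  set A : Matrix {v // v ∈ S} {v // v ∈ S} (ZMod 2) := Matrix.of fun i j => M i.1 j.1 with hA
  set u : Matrix {v // v ∈ S} Unit (ZMod 2) := Matrix.of fun i _ => M i.1 a with hu
  set c : Matrix Unit {v // v ∈ S} (ZMod 2) := Matrix.of fun _ j => M a j.1 with hc
  set w : Matrix {v // v ∈ S} Unit (ZMod 2) := Matrix.of fun i _ => M i.1 b with hw
  set d : Matrix Unit {v // v ∈ S} (ZMod 2) := Matrix.of fun _ j => M b j.1 with hd
  have hsubM : (Matrix.of fun i j : {v // v ∈ insert a S} => M i.1 j.1).submatrix e e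
      = Matrix.fromBlocks A u c 0 := by
    funext i j
    rcases i with i | ti <;> rcases j with j | tj
    · rfl
    · rfl
    · rfl
    · simp [he, sumEquiv₁, haa]
  have hsubN : (Matrix.of fun i j : {v // v ∈ insert a S} => pivot M a b i.1 j.1).submatrix e e
      = Matrix.fromBlocks (A + w * c + u * d) u c 0 := by
    funext i j
    rcases i with i | ti <;> rcases j with j | tj
    · have hia : i.1 ≠ a := fun h => haS (h ▸ i.2)
      have hib : i.1 ≠ b := fun h => hbS (h ▸ i.2)
      have hja : j.1 ≠ a := fun h => haS (h ▸ j.2)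
      have hjb : j.1 ≠ b := fun h => hbS (h ▸ j.2)
      have hP : pivot M a b i.1 j.1 = M i.1 j.1 + M i.1 a * M j.1 b + M i.1 b * M j.1 a := by
        unfold pivot; rw [if_neg (by tauto)]
      show pivot M a b i.1 j.1 = (A + w * c + u * d) i j
      rw [hP, Matrix.add_apply, Matrix.add_apply]
      have hwc : (w * c) i j = M i.1 b * M a j.1 := by
        simp [hw, hc, Matrix.mul_apply]
      have hud : (u * d) i j = M i.1 a * M b j.1 := by
        simp [hu, hd, Matrix.mul_apply]
      rw [hwc, hud, hA,
        show M a j.1 = M j.1 a from (hM.apply a j.1).symm,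
        show M b j.1 = M j.1 b from (hM.apply b j.1).symm]
      simp only [Matrix.of_apply]
      ring
    · show pivot M a b i.1 a = u i tj
      rw [pivot_apply_left]; rfl
    · show pivot M a b a j.1 = c ti j
      rw [pivot_apply_right]; rfl
    · show pivot M a b a a = (0 : Matrix Unit Unit (ZMod 2)) ti tj
      rw [pivot_apply_right]
      simpa using haa
  have key : Matrix.fromBlocks (A + w * c + u * d) u c (0 : Matrix Unit Unit (ZMod 2))
      = (Matrix.fromBlocks 1 w 0 1) * (Matrix.fromBlocks A u c 0) *
        (Matrix.fromBlocks 1 0 d 1) := by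
    rw [Matrix.fromBlocks_multiply, Matrix.fromBlocks_multiply]
    simp [Matrix.add_mul]
  have hdetL : IsUnit (Matrix.fromBlocks (1 : Matrix {v // v ∈ S} {v // v ∈ S} (ZMod 2))
      w 0 1).det := by
    rw [Matrix.det_fromBlocks_zero₂₁]; simp
  have hdetR : IsUnit (Matrix.fromBlocks (1 : Matrix {v // v ∈ S} {v // v ∈ S} (ZMod 2))
      0 d 1).det := by
    rw [Matrix.det_fromBlocks_zero₁₂]; simp
  have hm1 : mrank (pivot M a b) (insert a S) = (Matrix.fromBlocks (A + w * c + u * d) u c (0 : Matrix Unit Unit (ZMod 2))).rank := by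
    rw [mrank, ← hsubN, Matrix.rank_submatrix]
  have hm2 : mrank M (insert a S) = (Matrix.fromBlocks A u c (0 : Matrix Unit Unit (ZMod 2))).rank := by
    rw [mrank, ← hsubM, Matrix.rank_submatrix]
  rw [hm1, hm2, key,
    Matrix.rank_mul_eq_left_of_isUnit_det _ _ hdetR,
    Matrix.rank_mul_eq_right_of_isUnit_det _ _ hdetL]

end MrankLemmas

theorem pivot_reweight {V : Type} [Fintype V] [DecidableEq V]
    {R : Type} [CommRing R] (M : Matrix V V (ZMod 2)) (hM : M.IsSymm)
    (α β : V → R) (x y : R) (a b : V) (hab : a ≠ b)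
    (ha : M a a = 0) (hb : M b b = 0) (hadj : M a b = 1) :
    (x - 1) ^ 2 * interlaceQ M Finset.univ α β x y =
      interlaceQ (pivot M a b) Finset.univ
        (Function.update (Function.update α a (β b)) b (β a))
        (Function.update (Function.update β a (α b * (x - 1) ^ 2)) b
          (α a * (x - 1) ^ 2)) x y := by
  classical
  have hba : b ≠ a := hab.symm
  set N := pivot M a b with hN
  set αP := Function.update (Function.update α a (β b)) b (β a) with hαP
  set βP := Function.update (Function.update β a (α b * (x - 1) ^ 2)) b
    (α a * (x - 1) ^ 2) with hβP
  have hαPa : αP a = β b := by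
    rw [hαP, Function.update_of_ne hab, Function.update_self]
  have hαPb : αP b = β a := by rw [hαP, Function.update_self]
  have hβPa : βP a = α b * (x - 1) ^ 2 := by
    rw [hβP, Function.update_of_ne hab, Function.update_self]
  have hβPb : βP b = α a * (x - 1) ^ 2 := by rw [hβP, Function.update_self]
  have hαPv : ∀ v, v ≠ a → v ≠ b → αP v = α v := fun v hva hvb => by
    rw [hαP, Function.update_of_ne hvb, Function.update_of_ne hva]
  have hβPv : ∀ v, v ≠ a → v ≠ b → βP v = β v := fun v hva hvb => by
    rw [hβP, Function.update_of_ne hvb, Function.update_of_ne hva]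
  set u : Finset V := Finset.univ \ {a, b} with hu
  have hau : a ∉ u := by simp [hu]
  have hbu : b ∉ u := by simp [hu]
  have habu : a ∉ insert b u := by simp [hu, hab]
  have huniv : (Finset.univ : Finset V) = insert a (insert b u) := by
    ext v
    by_cases hva : v = a <;> by_cases hvb : v = b <;> simp [hu, hva, hvb]
  have expand : ∀ f : Finset V → R, ∑ S ∈ (Finset.univ : Finset V).powerset, f S
      = ∑ S ∈ u.powerset,
          (f S + f (insert b S) + (f (insert a S) + f (insert a (insert b S)))) := by
    intro f
    rw [huniv, Finset.sum_powerset_insert habu, Finset.sum_powerset_insert hbu,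
      Finset.sum_powerset_insert hbu, ← Finset.sum_add_distrib, ← Finset.sum_add_distrib,
      ← Finset.sum_add_distrib]
  unfold interlaceQ
  rw [expand, expand, Finset.mul_sum]
  apply Finset.sum_congr rfl
  intro S hS
  have hSu : S ⊆ u := Finset.mem_powerset.mp hS
  have haS : a ∉ S := fun h => hau (hSu h)
  have hbS : b ∉ S := fun h => hbu (hSu h)
  have habS : a ∉ insert b S := by simp [hab, haS]
  have hC0 : Finset.univ \ S = insert a (insert b (u \ S)) := by
    ext v
    by_cases hva : v = a <;> by_cases hvb : v = b <;>
      simp [hu, hva, hvb, haS, hbS]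
  have hCb : Finset.univ \ insert b S = insert a (u \ S) := by
    ext v
    by_cases hva : v = a <;> by_cases hvb : v = b <;>
      simp [hu, hva, hvb, haS, hbS, hab, hba]
  have hCa : Finset.univ \ insert a S = insert b (u \ S) := by
    ext v
    by_cases hva : v = a <;> by_cases hvb : v = b <;>
      simp [hu, hva, hvb, haS, hbS, hab, hba]
  have hCab : Finset.univ \ insert a (insert b S) = u \ S := by
    ext v
    by_cases hva : v = a <;> by_cases hvb : v = b <;>
      simp [hu, hva, hvb, haS, hbS]
  have hau' : a ∉ u \ S := by simp [hau]
  have hbu' : b ∉ u \ S := by simp [hbu]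
  have hab' : a ∉ insert b (u \ S) := by simp [hab, hau]
  have hba' : b ∉ insert a (u \ S) := by simp [hba, hbu]
  have hPα : ∏ s ∈ S, αP s = ∏ s ∈ S, α s :=
    Finset.prod_congr rfl fun v hv =>
      hαPv v (fun h => haS (h ▸ hv)) (fun h => hbS (h ▸ hv))
  have hPβ : ∏ v ∈ u \ S, βP v = ∏ v ∈ u \ S, β v := by
    refine Finset.prod_congr rfl fun v hv => ?_
    have hv' : v ∈ u := (Finset.mem_sdiff.mp hv).1
    have hvab : ¬(v = a ∨ v = b) := by
      have := Finset.mem_sdiff.mp (hu ▸ hv')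
      simpa using this.2
    push_neg at hvab
    exact hβPv v hvab.1 hvab.2
  have hcb : (insert b S).card = S.card + 1 := Finset.card_insert_of_notMem hbS
  have hca : (insert a S).card = S.card + 1 := Finset.card_insert_of_notMem haS
  have hcab : (insert a (insert b S)).card = S.card + 2 := by
    rw [Finset.card_insert_of_notMem habS, hcb]
  have hrab : mrank M (insert a (insert b S)) = mrank N S + 2 :=
    mrank_pair M hM a b hab ha hb hadj S haS hbS
  have hrab' : mrank N (insert a (insert b S)) = mrank M S + 2 :=
    mrank_pair' M hM a b hab ha hb hadj S haS hbS
  have hra : mrank N (insert a S) = mrank M (insert a S) :=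
    mrank_insert_one M hM a b ha S haS hbS
  have hrb : mrank N (insert b S) = mrank M (insert b S) := by
    rw [hN, pivot_comm]
    exact mrank_insert_one M hM b a hb S hbS haS
  rw [hC0, hCa, hCb, hCab]
  simp only [Finset.prod_insert habS, Finset.prod_insert hbS, Finset.prod_insert haS,
    Finset.prod_insert hab', Finset.prod_insert hbu', Finset.prod_insert hau']
  rw [hca, hcb, hcab, hrab, hrab', hra, hrb, hPα, hPβ, hαPa, hαPb, hβPa, hβPb,
    Nat.add_sub_add_right, Nat.add_sub_add_right, pow_add, pow_add]
  ring
end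

section
/- Let a and b be identical twins in a vertex-weighted graph G (either both looped and adjacent to each other, or both unlooped and nonadjacent to each other, and with the same neighbors outside {a,b}). Let G′ be obtained from G−b by changing the weights of a to β′(a) = β(a)β(b) and α′(a) = α(a)β(b) + α(a)α(b)(y−1) + β(a)α(b). Then q(G) = q(G′). -/
open Finset

lemma rank_le_of_comp {n m : Type} [Fintype n] [Fintype m] [DecidableEq m] [DecidableEq n]
    (A : Matrix m m (ZMod 2)) (f : n → m) :
    (Matrix.of fun i j : n => A (f i) (f j)).rank ≤ A.rank := by
  have h : (Matrix.of fun i j : n => A (f i) (f j)) =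
      (Matrix.of fun (i : n) (k : m) => if k = f i then (1:ZMod 2) else 0) * A *
      (Matrix.of fun (k : m) (j : n) => if k = f j then (1:ZMod 2) else 0) := by
    ext i j
    simp [Matrix.mul_apply, ite_mul, Finset.sum_ite_eq]
  rw [h]
  exact le_trans (Matrix.rank_mul_le_left _ _) (Matrix.rank_mul_le_right _ _)

lemma mrank_le_of_map {V : Type} [Fintype V] [DecidableEq V]
    (M : Matrix V V (ZMod 2)) {S T : Finset V} (f : {v // v ∈ S} → {v // v ∈ T})
    (hf : ∀ i j : {v // v ∈ S}, M i.1 j.1 = M (f i).1 (f j).1) :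
    mrank M S ≤ mrank M T := by
  unfold mrank
  have h : (Matrix.of fun i j : {v // v ∈ S} => M i.1 j.1) =
      Matrix.of (fun i j : {v // v ∈ S} =>
        (Matrix.of fun i j : {v // v ∈ T} => M i.1 j.1) (f i) (f j)) := by
    ext i j; exact hf i j
  rw [h]
  exact rank_le_of_comp _ f

lemma mrank_le_card {V : Type} [Fintype V] [DecidableEq V]
    (M : Matrix V V (ZMod 2)) (S : Finset V) : mrank M S ≤ S.card := by
  have := Matrix.rank_le_card_width (Matrix.of fun i j : {v // v ∈ S} => M i.1 j.1)
  simpa [mrank, Fintype.card_coe] using this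

set_option maxHeartbeats 1000000 in
theorem identical_twin_reduction {V : Type} [Fintype V] [DecidableEq V]
    {R : Type} [CommRing R] (M : Matrix V V (ZMod 2)) (hM : M.IsSymm)
    (α β : V → R) (x y : R) (a b : V) (hab : a ≠ b)
    (htwin : (M a a = 1 ∧ M b b = 1 ∧ M a b = 1) ∨ (M a a = 0 ∧ M b b = 0 ∧ M a b = 0))
    (hnbr : ∀ v : V, v ≠ a → v ≠ b → M a v = M b v) :
    interlaceQ M Finset.univ α β x y =
      interlaceQ M (Finset.univ.erase b)
        (Function.update α a (α a * β b + α a * α b * (y - 1) + β a * α b))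
        (Function.update β a (β a * β b)) x y := by
  have hba : b ≠ a := hab.symm
  have hbb : M b b = M a a := by rcases htwin with ⟨h1,h2,_⟩|⟨h1,h2,_⟩ <;> rw [h1,h2]
  have habm : M a b = M a a := by rcases htwin with ⟨h1,_,h3⟩|⟨h1,_,h3⟩ <;> rw [h1,h3]
  have hbam : M b a = M a a := by rw [hM.apply, habm]
  have hr : ∀ i j : V, M (if i = b then a else i) (if j = b then a else j) = M i j := by
    intro i j
    by_cases hi : i = b
    · by_cases hj : j = b
      · rw [if_pos hi, if_pos hj, hi, hj, hbb]
      · rw [if_pos hi, if_neg hj, hi]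
        by_cases hj' : j = a
        · rw [hj', hbam]
        · exact hnbr j hj' hj
    · by_cases hj : j = b
      · rw [if_neg hi, if_pos hj, hj, hM.apply a i]
        by_cases hi' : i = a
        · rw [hi', habm]
        · rw [hnbr i hi' hi]; exact hM.apply i b
      · rw [if_neg hi, if_neg hj]
  have hr' : ∀ i j : V, M (if i = a then b else i) (if j = a then b else j) = M i j := by
    intro i j
    by_cases hi : i = a
    · by_cases hj : j = a
      · rw [if_pos hi, if_pos hj, hi, hj, hbb]
      · rw [if_pos hi, if_neg hj, hi]
        by_cases hj' : j = b
        · rw [hj', hbb, habm]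
        · exact (hnbr j hj hj').symm
    · by_cases hj : j = a
      · rw [if_neg hi, if_pos hj, hj, hM.apply b i]
        by_cases hi' : i = b
        · rw [hi', hbb, hbam]
        · rw [← hnbr i hi hi']; exact hM.apply i a
      · rw [if_neg hi, if_neg hj]
  have haU : a ∈ (univ : Finset V).erase b := mem_erase.2 ⟨hab, mem_univ a⟩
  have haW : a ∉ ((univ : Finset V).erase b).erase a := notMem_erase _ _
  have hbU : b ∉ (univ : Finset V).erase b := notMem_erase _ _
  have hbW : b ∉ ((univ : Finset V).erase b).erase a :=
    fun h => hbU (mem_of_mem_erase h)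
  have hUW : (univ : Finset V).erase b = insert a (((univ : Finset V).erase b).erase a) :=
    (insert_erase haU).symm
  have huniv : (univ : Finset V) = insert b ((univ : Finset V).erase b) :=
    (insert_erase (mem_univ b)).symm
  rw [interlaceQ, interlaceQ]
  conv_lhs => rw [huniv, Finset.sum_powerset_insert hbU, hUW,
    Finset.sum_powerset_insert haW, Finset.sum_powerset_insert haW]
  conv_rhs => rw [hUW, Finset.sum_powerset_insert haW]
  rw [← Finset.sum_add_distrib, ← Finset.sum_add_distrib, ← Finset.sum_add_distrib,
    ← Finset.sum_add_distrib]
  refine Finset.sum_congr rfl fun S hS => ?_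
  rw [← hUW, ← huniv]
  have hSW : S ⊆ ((univ : Finset V).erase b).erase a := mem_powerset.1 hS
  have ha : a ∉ S := fun h => haW (hSW h)
  have hb : b ∉ S := fun h => hbW (hSW h)
  have hbaS : b ∉ insert a S := by
    rw [mem_insert]; rintro (h | h); exact hba h; exact hb h
  -- cards
  have hcard1 : (insert a S).card = S.card + 1 := card_insert_of_notMem ha
  have hcard2 : (insert b S).card = S.card + 1 := card_insert_of_notMem hb
  have hcard3 : (insert b (insert a S)).card = S.card + 2 := by
    rw [card_insert_of_notMem hbaS, hcard1]
  -- ranks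
  have f1 : ∀ v : {v // v ∈ insert b S}, (if v.1 = b then a else v.1) ∈ insert a S := by
    intro v
    by_cases h : v.1 = b
    · rw [if_pos h]; exact mem_insert_self _ _
    · rw [if_neg h]; exact mem_insert_of_mem ((mem_insert.1 v.2).resolve_left h)
  have f2 : ∀ v : {v // v ∈ insert a S}, (if v.1 = a then b else v.1) ∈ insert b S := by
    intro v
    by_cases h : v.1 = a
    · rw [if_pos h]; exact mem_insert_self _ _
    · rw [if_neg h]; exact mem_insert_of_mem ((mem_insert.1 v.2).resolve_left h)
  have f3 : ∀ v : {v // v ∈ insert b (insert a S)},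
      (if v.1 = b then a else v.1) ∈ insert a S := by
    intro v
    by_cases h : v.1 = b
    · rw [if_pos h]; exact mem_insert_self _ _
    · rw [if_neg h]; exact (mem_insert.1 v.2).resolve_left h
  have r1 : mrank M (insert b S) = mrank M (insert a S) := by
    refine le_antisymm (mrank_le_of_map M (fun v => ⟨_, f1 v⟩) fun i j => (hr i.1 j.1).symm)
      (mrank_le_of_map M (fun v => ⟨_, f2 v⟩) fun i j => (hr' i.1 j.1).symm)
  have r2 : mrank M (insert b (insert a S)) = mrank M (insert a S) := by
    refine le_antisymm (mrank_le_of_map M (fun v => ⟨_, f3 v⟩) fun i j => (hr i.1 j.1).symm)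
      (mrank_le_of_map M (fun v => ⟨v.1, mem_insert_of_mem v.2⟩) fun i j => rfl)
  have r3 : mrank M (insert a S) ≤ S.card + 1 := hcard1 ▸ mrank_le_card M (insert a S)
  -- sets
  have hain : a ∈ univ \ S := mem_sdiff.2 ⟨mem_univ a, ha⟩
  have hbin : b ∈ (univ \ S).erase a := mem_erase.2 ⟨hba, mem_sdiff.2 ⟨mem_univ b, hb⟩⟩
  have e2 : univ \ insert a S = (univ \ S).erase a := by
    ext v; simp only [mem_sdiff, mem_univ, mem_insert, mem_erase, true_and]; tauto
  have e3 : univ \ insert b S = (univ \ S).erase b := by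
    ext v; simp only [mem_sdiff, mem_univ, mem_insert, mem_erase, true_and]; tauto
  have e5 : univ \ insert b (insert a S) = ((univ \ S).erase a).erase b := by
    ext v; simp only [mem_sdiff, mem_univ, mem_insert, mem_erase, true_and]; tauto
  have e6 : (univ : Finset V).erase b \ S = (univ \ S).erase b := by
    ext v; simp only [mem_sdiff, mem_univ, mem_erase, true_and]; tauto
  have e4 : ((univ \ S).erase b).erase a = ((univ \ S).erase a).erase b := by
    ext v; simp only [mem_erase]; tauto
  have hbin2 : b ∈ (univ \ S).erase a := hbin
  have hain3 : a ∈ (univ \ S).erase b := mem_erase.2 ⟨hab, hain⟩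
  -- beta products
  have p0 : ∏ v ∈ univ \ S, β v = β a * (β b * ∏ v ∈ ((univ \ S).erase a).erase b, β v) := by
    rw [Finset.mul_prod_erase _ β hbin, Finset.mul_prod_erase _ β hain]
  have p1 : ∏ v ∈ univ \ insert a S, β v
      = β b * ∏ v ∈ ((univ \ S).erase a).erase b, β v := by
    rw [e2, ← Finset.mul_prod_erase _ β hbin]
  have p2 : ∏ v ∈ univ \ insert b S, β v
      = β a * ∏ v ∈ ((univ \ S).erase a).erase b, β v := by
    rw [e3, ← Finset.mul_prod_erase _ β hain3, e4]
  have p3 : ∏ v ∈ univ \ insert b (insert a S), β v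
      = ∏ v ∈ ((univ \ S).erase a).erase b, β v := by rw [e5]
  have hupd : ∀ v : V, v ≠ a → Function.update β a (β a * β b) v = β v :=
    fun v hv => Function.update_of_ne hv _ _
  have p4 : ∏ v ∈ (univ : Finset V).erase b \ S, Function.update β a (β a * β b) v
      = (β a * β b) * ∏ v ∈ ((univ \ S).erase a).erase b, β v := by
    rw [e6, ← Finset.mul_prod_erase _ _ hain3, Function.update_self, e4]
    congr 1
    exact Finset.prod_congr rfl fun v hv => hupd v (mem_erase.1 (mem_of_mem_erase hv)).1
  have e7 : (univ : Finset V).erase b \ insert a S = ((univ \ S).erase a).erase b := by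
    ext v; simp only [mem_sdiff, mem_univ, mem_insert, mem_erase, true_and]; tauto
  have p5 : ∏ v ∈ (univ : Finset V).erase b \ insert a S, Function.update β a (β a * β b) v
      = ∏ v ∈ ((univ \ S).erase a).erase b, β v := by
    rw [e7]
    exact Finset.prod_congr rfl fun v hv => hupd v (mem_erase.1 (mem_of_mem_erase hv)).1
  have pα1 : ∏ s ∈ S, Function.update α a (α a * β b + α a * α b * (y - 1) + β a * α b) s
      = ∏ s ∈ S, α s :=
    Finset.prod_congr rfl fun s hs => Function.update_of_ne (by rintro rfl; exact ha hs) _ _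
  have pα2 : ∏ s ∈ insert a S,
      Function.update α a (α a * β b + α a * α b * (y - 1) + β a * α b) s
      = (α a * β b + α a * α b * (y - 1) + β a * α b) * ∏ s ∈ S, α s := by
    rw [Finset.prod_insert ha, Function.update_self, pα1]
  rw [pα1, pα2, Finset.prod_insert hbaS, Finset.prod_insert hb, Finset.prod_insert ha,
    p0, p1, p2, p3, p4, p5, r1, r2, hcard1, hcard2, hcard3,
    show S.card + 2 - mrank M (insert a S) = (S.card + 1 - mrank M (insert a S)) + 1 from by
      omega,
    pow_succ]
  ring
end

section
/- Every nonempty simple (loopless) graph G satisfies ε(G) = 0, where ε(G) = q_N(G)(0) is the evaluation at y = 0 of the unweighted vertex-nullity interlace polynomial q_N(G) = Σ_{S ⊆ V(G)} (y−1)^{n(G[S])}. -/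
open Finset

section AuxEven
open Matrix

lemma vecMulVec_mulVec_eq {n : Type} [Fintype n] (u v x : n → ZMod 2) :
    (Matrix.vecMulVec u v).mulVec x = (v ⬝ᵥ x) • u := by
  ext i
  simp [Matrix.vecMulVec, Matrix.mulVec, dotProduct, Finset.mul_sum, mul_comm,
    mul_assoc, mul_left_comm]

lemma even_rank_aux : ∀ (r : ℕ) {n : Type} [Fintype n] [DecidableEq n]
    (M : Matrix n n (ZMod 2)), M.rank = r → M.IsSymm → (∀ i, M i i = 0) →
    Even M.rank := by
  intro r
  induction r using Nat.strong_induction_on with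
  | _ r ih =>
    intro n _ _ M hr hs hd
    by_cases h0 : M = 0
    · subst h0; simp [Matrix.rank_zero]
    · have hex : ∃ a b, M a b = 1 := by
        by_contra hc
        push_neg at hc
        apply h0
        ext i j
        have h2 : ∀ x : ZMod 2, x ≠ 1 → x = 0 := by decide
        exact h2 _ (hc i j)
      obtain ⟨a, b, hab⟩ := hex
      have hsym : ∀ i j, M j i = M i j := fun i j => hs.apply i j
      have hba : M b a = 1 := (hsym a b).trans hab
      set u : n → ZMod 2 := fun i => M i a with hu_def
      set v : n → ZMod 2 := fun i => M i b with hv_def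
      set N : Matrix n n (ZMod 2) := M + Matrix.vecMulVec u v + Matrix.vecMulVec v u with hN
      have hua : u a = 0 := hd a
      have hub : u b = 1 := hba
      have hva : v a = 1 := hab
      have hvb : v b = 0 := hd b
      have h2 : ∀ y : ZMod 2, y + y = 0 := by decide
      have hNsymm : N.IsSymm := by
        show Nᵀ = N
        ext i j
        simp only [hN, Matrix.transpose_apply, Matrix.add_apply, Matrix.vecMulVec_apply]
        rw [hsym i j]
        ring
      have hNdiag : ∀ i, N i i = 0 := by
        intro i
        simp only [hN, Matrix.add_apply, Matrix.vecMulVec_apply, hd i, zero_add]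
        rw [mul_comm (v i) (u i)]
        exact h2 _
      have hmul : ∀ x, N.mulVec x = M.mulVec x + (v ⬝ᵥ x) • u + (u ⬝ᵥ x) • v := by
        intro x
        simp [hN, Matrix.add_mulVec, vecMulVec_mulVec_eq]
      have hMmul : ∀ x, M.mulVec x = N.mulVec x + (v ⬝ᵥ x) • u + (u ⬝ᵥ x) • v := by
        intro x
        rw [hmul x]
        ext i
        simp only [Pi.add_apply, Pi.smul_apply, smul_eq_mul]
        have := h2 ((v ⬝ᵥ x) * u i)
        have := h2 ((u ⬝ᵥ x) * v i)
        linear_combination -(h2 ((v ⬝ᵥ x) * u i)) - (h2 ((u ⬝ᵥ x) * v i))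
      have hrowa : ∀ j, N a j = 0 := by
        intro j
        simp only [hN, Matrix.add_apply, Matrix.vecMulVec_apply, hua, hva, mul_zero,
          zero_mul, one_mul]
        rw [show u j = M a j from hsym a j]
        simpa using h2 (M a j)
      have hrowb : ∀ j, N b j = 0 := by
        intro j
        simp only [hN, Matrix.add_apply, Matrix.vecMulVec_apply, hub, hvb, mul_zero,
          zero_mul, one_mul]
        rw [show v j = M b j from hsym b j]
        simpa using h2 (M b j)
      set W := Submodule.span (ZMod 2) ({u, v} : Set (n → ZMod 2)) with hW
      set T := LinearMap.range N.mulVecLin with hT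
      set R := LinearMap.range M.mulVecLin with hR
      have huR : u ∈ R := ⟨Pi.single a 1, by ext i; simp [Matrix.mulVecLin_apply, Matrix.mulVec_single]; rfl⟩
      have hvR : v ∈ R := ⟨Pi.single b 1, by ext i; simp [Matrix.mulVecLin_apply, Matrix.mulVec_single]; rfl⟩
      have huTW : u ∈ T ⊔ W := Submodule.mem_sup_right (Submodule.subset_span (by simp))
      have hvTW : v ∈ T ⊔ W := Submodule.mem_sup_right (Submodule.subset_span (by simp))
      have hTR : T ≤ R := by
        rintro w ⟨x, rfl⟩
        rw [Matrix.mulVecLin_apply, hmul x]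
        exact add_mem (add_mem ⟨x, rfl⟩ (R.smul_mem _ huR)) (R.smul_mem _ hvR)
      have hWR : W ≤ R := by
        rw [hW, Submodule.span_le]
        rintro w hw
        simp only [Set.mem_insert_iff, Set.mem_singleton_iff] at hw
        rcases hw with rfl | rfl
        · exact huR
        · exact hvR
      have hRTW : R ≤ T ⊔ W := by
        rintro w ⟨x, rfl⟩
        rw [Matrix.mulVecLin_apply, hMmul x]
        exact add_mem (add_mem (Submodule.mem_sup_left ⟨x, rfl⟩)
          ((T ⊔ W).smul_mem _ huTW)) ((T ⊔ W).smul_mem _ hvTW)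
      have hEq : R = T ⊔ W := le_antisymm hRTW (sup_le hTR hWR)
      have hTab : ∀ w ∈ T, w a = 0 ∧ w b = 0 := by
        rintro w ⟨x, rfl⟩
        constructor
        · simp [Matrix.mulVecLin_apply, Matrix.mulVec, dotProduct, hrowa]
        · simp [Matrix.mulVecLin_apply, Matrix.mulVec, dotProduct, hrowb]
      have hdisj : T ⊓ W = ⊥ := by
        rw [eq_bot_iff]
        rintro w ⟨hwT, hwW⟩
        obtain ⟨c, d, rfl⟩ := Submodule.mem_span_pair.mp hwW
        obtain ⟨ha0, hb0⟩ := hTab _ hwT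
        have hd0 : d = 0 := by simpa [hua, hva] using ha0
        have hc0 : c = 0 := by simpa [hub, hvb] using hb0
        simp [hd0, hc0]
      have hli : LinearIndependent (ZMod 2) ![u, v] := by
        rw [LinearIndependent.pair_iff]
        intro s t hst
        constructor
        · have := congrFun hst b
          simpa [hub, hvb] using this
        · have := congrFun hst a
          simpa [hua, hva] using this
      have hWrank : Module.finrank (ZMod 2) W = 2 := by
        have hrange : Set.range ![u, v] = ({u, v} : Set (n → ZMod 2)) := by
          simp [Set.range_subset_iff, Set.pair_comm]
        rw [hW, ← hrange, finrank_span_eq_card hli]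
        simp
      have hfin := Submodule.finrank_sup_add_finrank_inf_eq T W
      rw [hdisj] at hfin
      have hMr : M.rank = Module.finrank (ZMod 2) (T ⊔ W : Submodule (ZMod 2) (n → ZMod 2)) := by
        rw [Matrix.rank]
        rw [← hR, hEq]
      have hNr : N.rank = Module.finrank (ZMod 2) T := rfl
      have hrankM : M.rank = N.rank + 2 := by
        rw [hMr, hNr]
        simp only [finrank_bot, add_zero] at hfin
        omega
      have hlt : N.rank < r := by omega
      have hEv := ih N.rank hlt N rfl hNsymm hNdiag
      rw [hrankM]
      exact hEv.add even_two

end AuxEven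

/-- The unweighted vertex-nullity interlace polynomial
`q_N(G) = Σ_{S ⊆ V(G)} (y−1)^{n(G[S])}` as a polynomial in `y` over `ℤ`. -/
noncomputable def qN {V : Type} [Fintype V] [DecidableEq V]
    (M : Matrix V V (ZMod 2)) : Polynomial ℤ :=
  ∑ S ∈ (Finset.univ : Finset V).powerset,
    (Polynomial.X - 1) ^ (S.card - mrank M S)

/-- The simple graph underlying the (possibly looped) graph with adjacency matrix `M`. -/
def graphOf {V : Type} (M : Matrix V V (ZMod 2)) : SimpleGraph V where
  Adj v w := v ≠ w ∧ M v w = 1 ∧ M w v = 1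
  symm := ⟨fun _ _ h => ⟨h.1.symm, h.2.2, h.2.1⟩⟩
  loopless := ⟨fun _ h => h.1 rfl⟩

open Finset in
theorem eps_simple_eq_zero {V : Type} [Fintype V] [DecidableEq V] [Nonempty V]
    (M : Matrix V V (ZMod 2)) (hM : M.IsSymm)
    (hsimple : ∀ v : V, M v v = 0) :
    (qN M).eval 0 = 0 := by
  have key : ∀ S : Finset V, Even (mrank M S) ∧ mrank M S ≤ S.card := by
    intro S
    have hsym : (Matrix.of (fun i j : {v // v ∈ S} => M i.1 j.1)).IsSymm :=
      Matrix.IsSymm.ext (fun i j => hM.apply i.1 j.1)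
    constructor
    · exact even_rank_aux _ _ rfl hsym (fun i => hsimple i.1)
    · calc (Matrix.of (fun i j : {v // v ∈ S} => M i.1 j.1)).rank
          ≤ Fintype.card {v // v ∈ S} := Matrix.rank_le_card_width _
        _ = S.card := Fintype.card_coe S
  rw [qN, Polynomial.eval_finset_sum]
  have hcong : ∀ S ∈ (univ : Finset V).powerset,
      Polynomial.eval 0 ((Polynomial.X - 1 : Polynomial ℤ) ^ (S.card - mrank M S))
        = (-1 : ℤ) ^ S.card := by
    intro S _
    obtain ⟨he, hle⟩ := key S
    rw [Polynomial.eval_pow]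
    simp only [Polynomial.eval_sub, Polynomial.eval_X, Polynomial.eval_one, zero_sub]
    have h1 : ((-1 : ℤ)) ^ (mrank M S) = 1 := he.neg_one_pow
    calc (-(1 : ℤ)) ^ (S.card - mrank M S)
        = (-1) ^ (S.card - mrank M S) * (-1) ^ (mrank M S) := by rw [h1, mul_one]
      _ = (-1) ^ (S.card - mrank M S + mrank M S) := (pow_add _ _ _).symm
      _ = (-1) ^ S.card := by rw [Nat.sub_add_cancel hle]
  rw [Finset.sum_congr rfl hcong]
  exact Finset.sum_powerset_neg_one_pow_card_of_nonempty univ_nonempty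
end

section
/- If G is a connected graph (loops allowed) with at least one looped vertex, then ε(G) = q_N(G)(0) > 1, where q_N(G) = Σ_{S ⊆ V(G)} (y−1)^{n(G[S])} with n the GF(2) nullity. -/
open Finset

namespace EpsProof

variable {V : Type} [Fintype V] [DecidableEq V]

noncomputable def nullity (M : Matrix V V (ZMod 2)) (S : Finset V) : ℕ :=
  Module.finrank (ZMod 2)
    (LinearMap.ker (Matrix.of (fun i j : {v // v ∈ S} => M i.1 j.1)).mulVecLin)

lemma mrank_add_nullity (M : Matrix V V (ZMod 2)) (S : Finset V) :
    mrank M S + nullity M S = S.card := by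
  rw [mrank, nullity, Matrix.rank]
  rw [LinearMap.finrank_range_add_finrank_ker]
  simp [Module.finrank_pi]

lemma card_sub_mrank (M : Matrix V V (ZMod 2)) (S : Finset V) :
    S.card - mrank M S = nullity M S := by
  rw [← mrank_add_nullity M S]; omega

def Ksol (M : Matrix V V (ZMod 2)) (S : Finset V) : Set (V → ZMod 2) :=
  {x | (∀ v, v ∉ S → x v = 0) ∧ ∀ i ∈ S, ∑ j ∈ S, M i j * x j = 0}

lemma card_Ksol (M : Matrix V V (ZMod 2)) (S : Finset V) :
    Nat.card (Ksol M S) = 2 ^ nullity M S := by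
  classical
  set A := Matrix.of (fun i j : {v // v ∈ S} => M i.1 j.1) with hA
  have e : Ksol M S ≃ LinearMap.ker A.mulVecLin := by
    refine ⟨fun y => ⟨fun i => y.1 i.1, ?_⟩, fun x => ⟨fun v => if h : v ∈ S then x.1 ⟨v, h⟩ else 0, ?_, ?_⟩, ?_, ?_⟩
    · obtain ⟨y, hy0, hy⟩ := y
      simp only [LinearMap.mem_ker, Matrix.mulVecLin_apply]
      funext i
      have := hy i.1 i.2
      simp only [Matrix.mulVec, dotProduct, Pi.zero_apply]
      rw [← Finset.sum_attach S (fun j => M i.1 j * y j)] at this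
      simpa [hA] using this
    · intro v hv; simp [hv]
    · intro i hi
      obtain ⟨x, hx⟩ := x
      rw [LinearMap.mem_ker, Matrix.mulVecLin_apply] at hx
      have := congrFun hx ⟨i, hi⟩
      simp only [Matrix.mulVec, dotProduct, Pi.zero_apply] at this
      rw [← Finset.sum_attach S (fun j => M i j * if h : j ∈ S then x ⟨j, h⟩ else 0)]
      simpa [hA] using this
    · rintro ⟨y, hy0, hy⟩
      ext v
      by_cases h : v ∈ S
      · simp [h]
      · simp [h, hy0 v h]
    · rintro ⟨x, hx⟩
      ext i
      simp [i.2]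
  rw [Nat.card_congr e]
  letI : Fintype (LinearMap.ker A.mulVecLin) :=
    Set.Finite.fintype (Set.toFinite _)
  rw [Nat.card_eq_fintype_card]
  have := Module.card_eq_pow_finrank (K := ZMod 2) (V := LinearMap.ker A.mulVecLin)
  simpa [ZMod.card, nullity, hA] using this

end EpsProof

namespace EpsProof

variable {V : Type} [Fintype V] [DecidableEq V]

lemma zmod2_add_eq_zero : ∀ (a b : ZMod 2), a + b = 0 ↔ a = b := by decide
lemma zmod2_sq : ∀ (a : ZMod 2), a * a = a := by decide
lemma zmod2_cancel : ∀ (u v : ZMod 2), u + (v + (u + v)) = 0 := by decide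

lemma nullity_eq_of_equiv {M M' : Matrix V V (ZMod 2)} {S S' : Finset V}
    (e : Ksol M S ≃ Ksol M' S') : nullity M S = nullity M' S' := by
  have h := card_Ksol M S
  have h' := card_Ksol M' S'
  rw [Nat.card_congr e, h'] at h
  exact (Nat.pow_right_injective (le_refl 2) h.symm)

lemma nullity_insert_loop (M : Matrix V V (ZMod 2)) (hM : M.IsSymm)
    {a : V} {S : Finset V} (ha : a ∉ S) (hl : M a a = 1) :
    nullity M (insert a S) = nullity (localComp M a) S := by
  apply nullity_eq_of_equiv
  have hsymm : ∀ i j, M i j = M j i := fun i j => (hM.apply j i)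
  refine ⟨fun x => ⟨fun v => if v = a then 0 else x.1 v, ?_, ?_⟩,
         fun y => ⟨fun v => if v = a then ∑ j ∈ S, M a j * y.1 j else y.1 v, ?_, ?_⟩, ?_, ?_⟩
  · -- support of forward image
    intro v hv
    by_cases h : v = a
    · simp [h]
    · simp only [if_neg h]
      exact x.2.1 v (by simp [Finset.mem_insert, h, hv])
  · -- equations of forward image
    intro i hi
    obtain ⟨x, hx0, hxe⟩ := x
    have hia : i ≠ a := fun h => ha (h ▸ hi)
    have hrowi := hxe i (Finset.mem_insert_of_mem hi)
    have hrowa := hxe a (Finset.mem_insert_self a S)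
    rw [Finset.sum_insert ha] at hrowi hrowa
    rw [hl, one_mul, zmod2_add_eq_zero] at hrowa
    -- hrowa : x a = ∑ j ∈ S, M a j * x j
    have key : ∀ j ∈ S, localComp M a i j * (if j = a then 0 else x j)
        = M i j * x j + M i a * (M j a * x j) := by
      intro j hj
      have hja : j ≠ a := fun h => ha (h ▸ hj)
      simp only [localComp, if_neg (by tauto : ¬(i = a ∨ j = a)), if_neg hja]
      ring
    rw [Finset.sum_congr rfl key, Finset.sum_add_distrib, ← Finset.mul_sum]
    have hxa : x a = ∑ j ∈ S, M j a * x j :=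
      hrowa.trans (Finset.sum_congr rfl (fun j _ => by rw [hsymm a j]))
    rw [← hxa, add_comm]
    exact hrowi
  · -- support of backward image
    intro v hv
    rw [Finset.mem_insert] at hv
    push_neg at hv
    simp only [if_neg hv.1]
    exact y.2.1 v hv.2
  · -- equations of backward image
    intro i hi
    obtain ⟨y, hy0, hye⟩ := y
    rw [Finset.sum_insert ha]
    rw [Finset.mem_insert] at hi
    rcases hi with rfl | hi
    · have hS : ∀ j ∈ S, j ≠ i := fun j hj h => ha (h ▸ hj)
      simp only [if_pos rfl, hl, one_mul]
      have hc : ∀ j ∈ S, M i j * (if j = i then ∑ j ∈ S, M i j * y j else y j) = M i j * y j := by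
        intro j hj; rw [if_neg (hS j hj)]
      rw [Finset.sum_congr rfl hc, zmod2_add_eq_zero]
      simp
    · have hS : ∀ j ∈ S, j ≠ a := fun j hj h => ha (h ▸ hj)
      have hia : i ≠ a := hS i hi
      have expand : ∑ j ∈ S, localComp M a i j * y j
          = (∑ j ∈ S, M i j * y j) + M i a * ∑ j ∈ S, M a j * y j := by
        rw [Finset.mul_sum, ← Finset.sum_add_distrib]
        apply Finset.sum_congr rfl
        intro j hj
        simp only [localComp, if_neg (by tauto : ¬(i = a ∨ j = a))]
        rw [hsymm j a]
        ring
      have h0 := hye i hi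
      rw [expand] at h0
      simp only [if_pos rfl]
      have hc : ∀ j ∈ S, M i j * (if j = a then ∑ j ∈ S, M a j * y j else y j) = M i j * y j := by
        intro j hj; rw [if_neg (hS j hj)]
      rw [Finset.sum_congr rfl hc, add_comm]
      exact h0
  · -- left inverse
    rintro ⟨x, hx0, hxe⟩
    apply Subtype.ext
    funext v
    simp only
    by_cases hv : v = a
    · subst hv
      simp only [if_pos rfl]
      have hrowa := hxe v (Finset.mem_insert_self v S)
      rw [Finset.sum_insert ha, hl, one_mul, zmod2_add_eq_zero] at hrowa
      rw [hrowa]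
      apply Finset.sum_congr rfl
      intro j hj
      rw [if_neg (fun h => ha (by rw [← h]; exact hj))]
    · simp [if_neg hv]
  · -- right inverse
    rintro ⟨y, hy0, hye⟩
    apply Subtype.ext
    funext v
    simp only
    by_cases hv : v = a
    · subst hv
      simp only [if_pos rfl]
      exact (hy0 v ha).symm
    · simp [if_neg hv]


def pivotM (M : Matrix V V (ZMod 2)) (i j : V) : Matrix V V (ZMod 2) :=
  fun u w => M u w + M u i * M j w + M u j * M i w

lemma nullity_pivot (M : Matrix V V (ZMod 2)) (hM : M.IsSymm)
    {i j : V} {S : Finset V} (hij : i ≠ j) (hiS : i ∉ S) (hjS : j ∉ S)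
    (hii : M i i = 0) (hjj : M j j = 0) (hMij : M i j = 1) :
    nullity M (insert i (insert j S)) = nullity (pivotM M i j) S := by
  apply nullity_eq_of_equiv
  have hsymm : ∀ u w, M u w = M w u := fun u w => (hM.apply w u)
  have hiT : i ∉ insert j S := by simp [hij, hiS]
  have hMji : M j i = 1 := by rw [hsymm j i]; exact hMij
  have hS : ∀ l ∈ S, l ≠ i ∧ l ≠ j := fun l hl =>
    ⟨fun h => hiS (h ▸ hl), fun h => hjS (h ▸ hl)⟩
  -- row expansion helper for x supported anywhere
  have rowexp : ∀ (x : V → ZMod 2) (k : V),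
      ∑ l ∈ insert i (insert j S), M k l * x l
        = M k i * x i + (M k j * x j + ∑ l ∈ S, M k l * x l) := by
    intro x k
    rw [Finset.sum_insert hiT, Finset.sum_insert hjS]
  refine ⟨fun x => ⟨fun v => if v = i ∨ v = j then 0 else x.1 v, ?_, ?_⟩,
         fun y => ⟨fun v => if v = i then ∑ l ∈ S, M j l * y.1 l
                   else if v = j then ∑ l ∈ S, M i l * y.1 l else y.1 v, ?_, ?_⟩, ?_, ?_⟩
  · intro v hv
    by_cases h : v = i ∨ v = j
    · simp [h]
    · simp only [if_neg h]
      push_neg at h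
      exact x.2.1 v (by simp [Finset.mem_insert, h.1, h.2, hv])
  · -- forward equations
    intro k hk
    obtain ⟨x, hx0, hxe⟩ := x
    have hki : k ≠ i := (hS k hk).1
    have hkj : k ≠ j := (hS k hk).2
    have hrowi := hxe i (Finset.mem_insert_self _ _)
    have hrowj := hxe j (Finset.mem_insert_of_mem (Finset.mem_insert_self _ _))
    have hrowk := hxe k (Finset.mem_insert_of_mem (Finset.mem_insert_of_mem hk))
    rw [rowexp] at hrowi hrowj hrowk
    simp only [hii, hjj, hMij, hMji, zero_mul, one_mul, zero_add, add_zero] at hrowi hrowj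
    rw [zmod2_add_eq_zero] at hrowi hrowj
    simp only
    -- hrowi : x j = ∑ l ∈ S, M i l * x l ; hrowj : x i = ∑ l ∈ S, M j l * x l
    have hc : ∀ l ∈ S, pivotM M i j k l * (if l = i ∨ l = j then 0 else x l)
        = M k l * x l + (M k i * (M j l * x l) + M k j * (M i l * x l)) := by
      intro l hl
      rw [if_neg (by push_neg; exact hS l hl)]
      simp only [pivotM]
      ring
    rw [Finset.sum_congr rfl hc, Finset.sum_add_distrib, Finset.sum_add_distrib,
      ← Finset.mul_sum, ← Finset.mul_sum, ← hrowi, ← hrowj]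
    rw [zmod2_add_eq_zero] at hrowk
    rw [hrowk]
    have : ∀ u v : ZMod 2, u + (v + u + v) = 0 := by decide
    exact this _ _
  · -- backward support
    intro v hv
    simp only [Finset.mem_insert] at hv
    push_neg at hv
    simp only [if_neg hv.1, if_neg hv.2.1]
    exact y.2.1 v hv.2.2
  · -- backward equations
    intro k hk
    obtain ⟨y, hy0, hye⟩ := y
    rw [rowexp]
    simp only [if_pos rfl, if_neg hij, if_neg (Ne.symm hij)]
    have hc : ∀ l ∈ S, M k l * (if l = i then ∑ l ∈ S, M j l * y l
        else if l = j then ∑ l ∈ S, M i l * y l else y l) = M k l * y l := by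
      intro l hl
      rw [if_neg (hS l hl).1, if_neg (hS l hl).2]
    rw [Finset.sum_congr rfl hc]
    simp only [Finset.mem_insert] at hk
    rcases hk with rfl | rfl | hk
    · simp only [hii, hMij, zero_mul, one_mul, zero_add]
      rw [zmod2_add_eq_zero]
      simp
    · simp only [hjj, hMji, zero_mul, one_mul, zero_add, add_zero]
      rw [zmod2_add_eq_zero]
      simp
    · have h0 := hye k hk
      have expand : ∑ l ∈ S, pivotM M i j k l * y l
          = (∑ l ∈ S, M k l * y l) + ((M k i * ∑ l ∈ S, M j l * y l)
            + M k j * ∑ l ∈ S, M i l * y l) := by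
        rw [Finset.mul_sum, Finset.mul_sum, ← Finset.sum_add_distrib, ← Finset.sum_add_distrib]
        apply Finset.sum_congr rfl
        intro l hl
        simp only [pivotM]
        ring
      rw [expand] at h0
      rw [add_comm] at h0
      rw [← h0]
      simp [add_comm, add_assoc, add_left_comm]
  · -- left inverse
    rintro ⟨x, hx0, hxe⟩
    apply Subtype.ext
    funext v
    simp only
    have hrowi := hxe i (Finset.mem_insert_self _ _)
    have hrowj := hxe j (Finset.mem_insert_of_mem (Finset.mem_insert_self _ _))
    rw [rowexp] at hrowi hrowj
    simp only [hii, hjj, hMij, hMji, zero_mul, one_mul, zero_add, add_zero] at hrowi hrowj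
    rw [zmod2_add_eq_zero] at hrowi hrowj
    have hkill : ∀ (w : V), (∀ l ∈ S, M w l * (if l = i ∨ l = j then 0 else x l) = M w l * x l) := by
      intro w l hl
      rw [if_neg (by push_neg; exact hS l hl)]
    by_cases hv : v = i
    · subst hv
      rw [if_pos rfl, Finset.sum_congr rfl (hkill j), ← hrowj]
    · rw [if_neg hv]
      by_cases hv2 : v = j
      · subst hv2
        rw [if_pos rfl, Finset.sum_congr rfl (hkill i), ← hrowi]
      · rw [if_neg hv2, if_neg (by push_neg; exact ⟨hv, hv2⟩)]
  · -- right inverse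
    rintro ⟨y, hy0, hye⟩
    apply Subtype.ext
    funext v
    simp only
    by_cases hv : v = i ∨ v = j
    · rw [if_pos hv]
      rcases hv with rfl | rfl
      · exact (hy0 v hiS).symm
      · exact (hy0 v hjS).symm
    · push_neg at hv
      rw [if_neg (by push_neg; exact hv), if_neg hv.1, if_neg hv.2]


lemma zmod2_ne_zero : ∀ (a : ZMod 2), a ≠ 0 → a = 1 := by decide
lemma zmod2_ne_one : ∀ (a : ZMod 2), a ≠ 1 → a = 0 := by decide

lemma nullity_all_zero (M : Matrix V V (ZMod 2)) {S : Finset V}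
    (h : ∀ i ∈ S, ∀ j ∈ S, M i j = 0) : nullity M S = S.card := by
  have e : Ksol M S ≃ ({v // v ∈ S} → ZMod 2) := by
    refine ⟨fun x i => x.1 i.1, fun y => ⟨fun v => if h : v ∈ S then y ⟨v, h⟩ else 0, ?_, ?_⟩, ?_, ?_⟩
    · intro v hv; simp [hv]
    · intro i hi
      apply Finset.sum_eq_zero
      intro j hj
      rw [h i hi j hj, zero_mul]
    · rintro ⟨x, hx0, hxe⟩
      apply Subtype.ext
      funext v
      by_cases hv : v ∈ S
      · simp [hv]
      · simp [hv, hx0 v hv]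
    · intro y
      funext i
      simp [i.2]
  have hcard := card_Ksol M S
  rw [Nat.card_congr e] at hcard
  have : Nat.card ({v // v ∈ S} → ZMod 2) = 2 ^ S.card := by
    simp [Nat.card_fun, Nat.card_eq_fintype_card]
  rw [this] at hcard
  exact (Nat.pow_right_injective (le_refl 2) hcard.symm)

lemma nullity_empty (M : Matrix V V (ZMod 2)) : nullity M ∅ = 0 := by
  have := nullity_all_zero M (S := ∅) (by simp)
  simpa using this

lemma pivotM_isSymm {M : Matrix V V (ZMod 2)} (hM : M.IsSymm) (i j : V) :
    (pivotM M i j).IsSymm := by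
  apply Matrix.IsSymm.ext
  intro u w
  simp only [pivotM]
  rw [hM.apply u w, hM.apply i w, hM.apply u j, hM.apply j w, hM.apply u i]
  ring

lemma nullity_parity : ∀ (n : ℕ) (M : Matrix V V (ZMod 2)) (S : Finset V), S.card ≤ n →
    M.IsSymm → (∀ v ∈ S, M v v = 0) → ((-1:ℤ)) ^ nullity M S = (-1) ^ S.card := by
  intro n
  induction n with
  | zero =>
    intro M S hc _ _
    rw [Finset.card_eq_zero.mp (Nat.le_zero.mp hc)]
    rw [nullity_empty]
    simp
  | succ n ih =>
    intro M S hc hM hdiag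
    by_cases hz : ∀ i ∈ S, ∀ j ∈ S, M i j = 0
    · rw [nullity_all_zero M hz]
    · push_neg at hz
      obtain ⟨i, hi, j, hj, hne⟩ := hz
      have hMij : M i j = 1 := zmod2_ne_zero _ hne
      have hij : i ≠ j := by
        rintro rfl
        exact hne (hdiag i hi)
      set S' := (S.erase i).erase j with hS'
      have hjS' : j ∉ S' := Finset.notMem_erase _ _
      have hiS' : i ∉ S' := fun h => Finset.notMem_erase i S (Finset.erase_subset _ _ h)
      have hSeq : insert i (insert j S') = S := by
        rw [hS']
        rw [Finset.insert_erase (by rw [Finset.mem_erase]; exact ⟨Ne.symm hij, hj⟩)]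
        rw [Finset.insert_erase hi]
      have hcard2 : S.card = S'.card + 2 := by
        rw [← hSeq, Finset.card_insert_of_notMem (by simp [hij, hiS']),
          Finset.card_insert_of_notMem hjS']
      have hsub : S' ⊆ S := by rw [← hSeq]; intro x hx; simp [Finset.mem_insert, hx]
      have hpiv := nullity_pivot M hM hij hiS' hjS' (hdiag i hi) (hdiag j hj) hMij
      rw [hSeq] at hpiv
      rw [hpiv]
      have hds : (pivotM M i j).IsSymm := pivotM_isSymm hM i j
      have hdd : ∀ v ∈ S', pivotM M i j v v = 0 := by
        intro v hv
        simp only [pivotM]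
        rw [hdiag v (hsub hv), hM.apply v j, hM.apply v i]
        have : ∀ u w : ZMod 2, (0:ZMod 2) + u * w + w * u = 0 := by decide
        exact this _ _
      rw [ih (pivotM M i j) S' (by omega) hds hdd, hcard2, pow_add]
      simp

noncomputable def eps (M : Matrix V V (ZMod 2)) (W : Finset V) : ℤ :=
  ∑ S ∈ W.powerset, (-1) ^ (nullity M S)

lemma eps_empty (M : Matrix V V (ZMod 2)) : eps M ∅ = 1 := by
  simp [eps, nullity_empty]

lemma eps_loopless {M : Matrix V V (ZMod 2)} (hM : M.IsSymm) {W : Finset V}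
    (hW : W.Nonempty) (h0 : ∀ v ∈ W, M v v = 0) : eps M W = 0 := by
  rw [eps]
  have : ∀ S ∈ W.powerset, ((-1:ℤ)) ^ (nullity M S) = (-1) ^ S.card := by
    intro S hS
    rw [Finset.mem_powerset] at hS
    exact nullity_parity S.card M S le_rfl hM (fun v hv => h0 v (hS hv))
  rw [Finset.sum_congr rfl this]
  exact Finset.sum_powerset_neg_one_pow_card_of_nonempty hW

lemma localComp_isSymm {M : Matrix V V (ZMod 2)} (hM : M.IsSymm) (a : V) :
    (localComp M a).IsSymm := by
  apply Matrix.IsSymm.ext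
  intro u w
  simp only [localComp]
  by_cases h : w = a ∨ u = a
  · rw [if_pos h, if_pos (Or.symm h), hM.apply u w]
  · rw [if_neg h, if_neg (fun hh => h (Or.symm hh)), hM.apply u w]
    ring

lemma eps_rec {M : Matrix V V (ZMod 2)} (hM : M.IsSymm) {W : Finset V} {a : V}
    (ha : a ∈ W) (hl : M a a = 1) :
    eps M W = eps M (W.erase a) + eps (localComp M a) (W.erase a) := by
  have hW : insert a (W.erase a) = W := Finset.insert_erase ha
  conv_lhs => rw [eps, ← hW, Finset.sum_powerset_insert (Finset.notMem_erase a W)]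
  congr 1
  apply Finset.sum_congr rfl
  intro S hS
  rw [Finset.mem_powerset] at hS
  have haS : a ∉ S := fun h => Finset.notMem_erase a W (hS h)
  rw [nullity_insert_loop M hM haS hl]


def Step (M : Matrix V V (ZMod 2)) (W : Finset V) (x y : V) : Prop :=
  x ∈ W ∧ y ∈ W ∧ x ≠ y ∧ M x y = 1

def Reach (M : Matrix V V (ZMod 2)) (W : Finset V) : V → V → Prop :=
  Relation.ReflTransGen (Step M W)

lemma reach_mem {M : Matrix V V (ZMod 2)} {W : Finset V} {v u : V}
    (hv : v ∈ W) (h : Reach M W v u) : u ∈ W := by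
  induction h with
  | refl => exact hv
  | tail _ st _ => exact st.2.1

lemma reach_mono {M : Matrix V V (ZMod 2)} {W W' : Finset V} (hWW : W ⊆ W') {v u : V}
    (h : Reach M W v u) : Reach M W' v u :=
  Relation.ReflTransGen.mono (p := Step M W') (fun x y st => ⟨hWW st.1, hWW st.2.1, st.2.2⟩) v u h

lemma zmod2_zero_ne_one : (0 : ZMod 2) ≠ 1 := by decide

lemma reach_split {M : Matrix V V (ZMod 2)} {W : Finset V} {a v u : V}
    (hv : v ∈ W.erase a) (h : Reach M W v u) :
    Reach M (W.erase a) v u ∨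
      ∃ x, Reach M (W.erase a) v x ∧ M x a = 1 ∧ x ∈ W.erase a := by
  induction h with
  | refl => exact Or.inl Relation.ReflTransGen.refl
  | @tail u' u'' h' st ih =>
    rcases ih with h1 | h2
    · by_cases hu : u'' = a
      · refine Or.inr ⟨u', h1, ?_, reach_mem hv h1⟩
        rw [← hu]; exact st.2.2.2
      · exact Or.inl (h1.tail ⟨reach_mem hv h1, Finset.mem_erase.mpr ⟨hu, st.2.1⟩, st.2.2⟩)
    · exact Or.inr h2

lemma main : ∀ (n : ℕ) (M : Matrix V V (ZMod 2)) (W : Finset V), W.card ≤ n → M.IsSymm →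
    (0 ≤ eps M W) ∧
    ((∃ v ∈ W, ∀ u ∈ W, Reach M W v u → M u u = 0) → eps M W = 0) ∧
    (W.Nonempty → (∀ v ∈ W, ∃ u ∈ W, Reach M W v u ∧ M u u = 1) → 2 ≤ eps M W) := by
  intro n
  induction n with
  | zero =>
    intro M W hc _
    have hW : W = ∅ := Finset.card_eq_zero.mp (Nat.le_zero.mp hc)
    subst hW
    refine ⟨by rw [eps_empty]; norm_num, ?_, ?_⟩
    · rintro ⟨v, hv, -⟩; exact absurd hv (Finset.notMem_empty v)
    · rintro ⟨v, hv⟩; exact absurd hv (Finset.notMem_empty v)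
  | succ n ih =>
    intro M W hc hM
    by_cases hz : ∀ v ∈ W, M v v = 0
    · -- loopless case
      rcases Finset.eq_empty_or_nonempty W with rfl | hWne
      · refine ⟨by rw [eps_empty]; norm_num, ?_, ?_⟩
        · rintro ⟨v, hv, -⟩; exact absurd hv (Finset.notMem_empty v)
        · rintro ⟨v, hv⟩; exact absurd hv (Finset.notMem_empty v)
      · have h0 := eps_loopless hM hWne hz
        refine ⟨le_of_eq h0.symm, fun _ => h0, ?_⟩
        intro hne hcov
        obtain ⟨v, hv⟩ := hne
        obtain ⟨u, hu, -, hul⟩ := hcov v hv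
        exact absurd ((hz u hu).symm.trans hul) zmod2_zero_ne_one
    · push_neg at hz
      obtain ⟨a, ha, hane⟩ := hz
      have hl : M a a = 1 := zmod2_ne_zero _ hane
      set W' := W.erase a with hW'def
      set M' := localComp M a with hM'def
      have hrec : eps M W = eps M W' + eps M' W' := eps_rec hM ha hl
      have hM's := localComp_isSymm hM a
      have hc' : W'.card ≤ n := by
        rw [hW'def, Finset.card_erase_of_mem ha]
        have : 1 ≤ W.card := Finset.card_pos.mpr ⟨a, ha⟩
        omega
      have IH1 := ih M W' hc' hM
      have IH2 := ih M' W' hc' hM's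
      have hane' : ∀ v ∈ W', v ≠ a := fun v hv => (Finset.mem_erase.mp hv).1
      have hW'sub : W' ⊆ W := Finset.erase_subset a W
      -- localComp diagonal/entry facts
      have hM'diag : ∀ u, u ≠ a → M' u u = M u u + M u a := by
        intro u hu
        rw [hM'def]
        simp only [localComp, if_neg (by tauto : ¬(u = a ∨ u = a))]
        rw [zmod2_sq]
      have hM'ent : ∀ u w, u ≠ a → w ≠ a → M' u w = M u w + M u a * M w a := by
        intro u w hu hw
        rw [hM'def]
        simp only [localComp, if_neg (by tauto : ¬(u = a ∨ w = a))]
      refine ⟨?_, ?_, ?_⟩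
      · rw [hrec]
        exact add_nonneg IH1.1 IH2.1
      · -- part B
        rintro ⟨v, hvW, hll⟩
        have hv0 : M v v = 0 := hll v hvW Relation.ReflTransGen.refl
        have hva : v ≠ a := fun h => zmod2_zero_ne_one (by rw [← hv0, h, hl])
        have hvW' : v ∈ W' := Finset.mem_erase.mpr ⟨hva, hvW⟩
        have loop0 : ∀ u, Reach M W v u → M u u = 0 :=
          fun u h => hll u (reach_mem hvW h) h
        have hMua : ∀ u, Reach M W v u → M u a = 0 := by
          intro u h
          by_contra hne
          have h1 : M u a = 1 := zmod2_ne_zero _ hne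
          have hu : u ∈ W := reach_mem hvW h
          have hua : u ≠ a := fun hh =>
            zmod2_zero_ne_one (by rw [← loop0 u h, hh, hl])
          have : Reach M W v a := h.tail ⟨hu, ha, hua, h1⟩
          exact zmod2_zero_ne_one (by rw [← loop0 a this, hl])
        have hreach' : ∀ u, Reach M' W' v u → Reach M W v u := by
          intro u h
          induction h with
          | refl => exact Relation.ReflTransGen.refl
          | @tail x y h' st ihr =>
            have hxa : M x a = 0 := hMua x ihr
            have hMxy : M x y = 1 := by
              have := st.2.2.2
              rw [hM'ent x y (hane' x st.1) (hane' y st.2.1), hxa, zero_mul, add_zero] at this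
              exact this
            exact ihr.tail ⟨hW'sub st.1, hW'sub st.2.1, st.2.2.1, hMxy⟩
        have hB1 : eps M W' = 0 := IH1.2.1
          ⟨v, hvW', fun u hu hr => loop0 u (reach_mono hW'sub hr)⟩
        have hB2 : eps M' W' = 0 := by
          apply IH2.2.1
          refine ⟨v, hvW', fun u hu hr => ?_⟩
          have hMr := hreach' u hr
          rw [hM'diag u (hane' u hu), loop0 u hMr, hMua u hMr, add_zero]
        rw [hrec, hB1, hB2]
        norm_num
      · -- part C
        intro hWne hcov
        rcases Finset.eq_empty_or_nonempty W' with hW'e | hW'ne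
        · rw [hrec, hW'e, eps_empty, eps_empty]
          norm_num
        · by_cases hd : ∀ v ∈ W', ∃ u ∈ W', Reach M W' v u ∧ M u u = 1
          · have h1 := IH1.2.2 hW'ne hd
            have h2 := IH2.1
            rw [hrec]; omega
          · push_neg at hd
            obtain ⟨v1, hv1W', hd1⟩ := hd
            have hll1 : ∀ u, Reach M W' v1 u → M u u = 0 := fun u h =>
              zmod2_ne_one _ (hd1 u (reach_mem hv1W' h) h)
            -- get x1 adjacent to a, unlooped, reachable from v1 in W'
            obtain ⟨u1, hu1W, hr1, hloop1⟩ := hcov v1 (hW'sub hv1W')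
            have hx1 : ∃ x, Reach M W' v1 x ∧ M x a = 1 ∧ x ∈ W' := by
              rcases reach_split hv1W' hr1 with hin | hout
              · exact absurd ((hll1 u1 hin).symm.trans hloop1) zmod2_zero_ne_one
              · exact hout
            obtain ⟨x1, hx1r, hx1a, hx1W'⟩ := hx1
            have hx1loop : M x1 x1 = 0 := hll1 x1 hx1r
            -- claim: every vertex of W' reaches a loop in (M', W')
            suffices hclaim : ∀ v2 ∈ W', ∃ u ∈ W', Reach M' W' v2 u ∧ M' u u = 1 by
              have h2 := IH2.2.2 hW'ne hclaim
              have h1 := IH1.1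
              rw [hrec]; omega
            intro v2 hv2W'
            by_contra hd2'
            push_neg at hd2'
            have hll2 : ∀ u, Reach M' W' v2 u → M' u u = 0 := fun u h =>
              zmod2_ne_one _ (hd2' u (reach_mem hv2W' h) h)
            have hdiag2 : ∀ u, Reach M' W' v2 u → M u u = M u a := by
              intro u h
              have h0 := hll2 u h
              rw [hM'diag u (hane' u (reach_mem hv2W' h)), zmod2_add_eq_zero] at h0
              exact h0
            -- C meets N
            have hmeet : ∃ u, Reach M' W' v2 u ∧ M u a = 1 := by
              by_contra hall
              push_neg at hall
              have hall0 : ∀ u, Reach M' W' v2 u → M u a = 0 := fun u h =>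
                zmod2_ne_one _ (hall u h)
              have htrans : ∀ u, Reach M W v2 u → Reach M' W' v2 u := by
                intro u h
                induction h with
                | refl => exact Relation.ReflTransGen.refl
                | @tail x y h' st ihr =>
                  have hxa : M x a = 0 := hall0 x ihr
                  have hya : y ≠ a := by
                    rintro rfl
                    rw [st.2.2.2] at hxa
                    exact zmod2_zero_ne_one hxa.symm
                  have hxW' : x ∈ W' := reach_mem hv2W' ihr
                  have hyW' : y ∈ W' := Finset.mem_erase.mpr ⟨hya, st.2.1⟩
                  have hM'xy : M' x y = 1 := by
                    rw [hM'ent x y (hane' x hxW') hya, hxa, zero_mul, add_zero]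
                    exact st.2.2.2
                  exact ihr.tail ⟨hxW', hyW', st.2.2.1, hM'xy⟩
              obtain ⟨u2, hu2W, hr2, hloop2⟩ := hcov v2 (hW'sub hv2W')
              have hru2 := htrans u2 hr2
              have := hdiag2 u2 hru2
              rw [hall0 u2 hru2] at this
              exact zmod2_zero_ne_one ((this.symm.trans hloop2))
            obtain ⟨u0, hru0, hu0a⟩ := hmeet
            have hu0W' : u0 ∈ W' := reach_mem hv2W' hru0
            have hu0loop : M u0 u0 = 1 := by rw [hdiag2 u0 hru0, hu0a]
            have hne10 : x1 ≠ u0 := by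
              rintro rfl
              exact zmod2_zero_ne_one (hx1loop.symm.trans hu0loop)
            by_cases hMux : M u0 x1 = 0
            · have hstep : M' u0 x1 = 1 := by
                rw [hM'ent u0 x1 (hane' u0 hu0W') (hane' x1 hx1W'), hMux, zero_add,
                  hu0a, one_mul, hx1a]
              have hrx1 : Reach M' W' v2 x1 :=
                hru0.tail ⟨hu0W', hx1W', hne10.symm, hstep⟩
              have := hdiag2 x1 hrx1
              rw [hx1a] at this
              exact zmod2_zero_ne_one (hx1loop.symm.trans this)
            · have h1 : M x1 u0 = 1 := by
                rw [hM.apply x1 u0] at hMux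
                exact zmod2_ne_zero _ hMux
              have hru0' : Reach M W' v1 u0 :=
                hx1r.tail ⟨hx1W', hu0W', hne10, h1⟩
              exact zmod2_zero_ne_one ((hll1 u0 hru0').symm.trans hu0loop)


end EpsProof

open EpsProof

theorem eps_gt_one_of_connected_looped {V : Type} [Fintype V] [DecidableEq V]
    (M : Matrix V V (ZMod 2)) (hM : M.IsSymm)
    (hconn : (graphOf M).Connected) (hloop : ∃ v : V, M v v = 1) :
    1 < (qN M).eval 0 := by
  have hqe : (qN M).eval 0 = eps M Finset.univ := by
    rw [qN, eps, Polynomial.eval_finset_sum]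
    apply Finset.sum_congr rfl
    intro S _
    rw [EpsProof.card_sub_mrank]
    simp
  have hne : Nonempty V := hconn.nonempty
  have hwalk : ∀ {x y : V}, (graphOf M).Walk x y → Reach M Finset.univ x y := by
    intro x y p
    induction p with
    | nil => exact Relation.ReflTransGen.refl
    | cons h p ih =>
      exact Relation.ReflTransGen.head
        ⟨Finset.mem_univ _, Finset.mem_univ _, (show _ ≠ _ ∧ M _ _ = 1 ∧ M _ _ = 1 from h).1,
          (show _ ≠ _ ∧ M _ _ = 1 ∧ M _ _ = 1 from h).2.1⟩ ih
  have key := (EpsProof.main (Fintype.card V) M Finset.univ (by simp) hM).2.2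
    Finset.univ_nonempty ?_
  · omega
  · intro v _
    obtain ⟨v0, hv0⟩ := hloop
    refine ⟨v0, Finset.mem_univ _, ?_, hv0⟩
    exact (hconn.preconnected v v0).elim fun p => hwalk p
end
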